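/- arXiv:1801.07193 — 6 statements merged into one kernel-verified Lean document; each statement's English description precedes it below -/
import Mathlib

section
/- There exists an α > 0 and an n₀ ∈ ℕ such that for every even n ≥ n₀ there exists a 3-regular simple graph on n vertices on which αn cops do not suffice to catch the robber in the entanglement game (the robber has a winning strategy against ⌊αn⌋ cops). -/
/-- One legal move of the cops when the robber stands on `r`: either all cops stay put,
or one cop (possibly coming from off the graph, i.e. from `none`) flies to `r`. -/
def CopMove {V : Type*} {k : ℕ} (r : V) (f f' : Fin k → Option V) : Prop :=
  f' = f ∨ ∃ i : Fin k, f' = Function.update f i (some r)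

/-- The cops can force a catch from the position where the cops are placed according to
`f` (a cop with value `none` is off the graph) and the robber stands on `r`.  After the
cop move `f'`, the robber must move to an unoccupied neighbour; if he has no such
neighbour the cops have won (the inner quantification is vacuous). -/
inductive CopsWin {V : Type*} (G : SimpleGraph V) (k : ℕ) :
    (Fin k → Option V) → V → Prop where
  | step : ∀ (f : Fin k → Option V) (r : V) (f' : Fin k → Option V),
      CopMove r f f' →
      (∀ u : V, G.Adj r u → (∀ i, f' i ≠ some u) → CopsWin G k f' u) →
      CopsWin G k f r

/-- `k` cops suffice to catch the robber on `G`: wherever the robber chooses to start,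
the cops (starting off the graph) can catch him. -/
def CopsCatch {V : Type*} (G : SimpleGraph V) (k : ℕ) : Prop :=
  ∀ r : V, CopsWin G k (fun _ => none) r

open scoped Classical

/-!
The robber beats `k` cops on `G` as soon as, for every set `S` of at most `k + 1` vertices,
`G - S` has a component containing more than half of the vertices: he always stays in the
majority component of the graph minus the cops, and when a cop lands on him he steps into the
majority component of the graph minus the new cop positions and his own vertex, which meets
the old one.

Such graphs are found among a Hamiltonian cycle on `Fin (m + m)` plus a perfect matching
`σ` between its two halves. If some small `S` leaves no majority component, the components of
`G - S` can be grouped into two sides `A` and `B` of linear size, and no matching edge joins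
the left part of one side to the right part of the other. As the cycle minus `S` is a union
of arcs, `A` is determined by `S` and a subset `T ⊆ S`, so there are at most
`∑_{|S| ≤ c} 2 ^ |S| ≤ 1024 ^ c (1 + 1 / 512) ^ (2 m)` such certificates, while a random `σ`
respects a fixed one with probability at most `(1 - t / m) ^ t ≤ exp (-t ^ 2 / m)` for
`t = m / 10`. For `c ≤ m / 5000 + 1` the expected number of certified cuts is below `1 / 2`,
and the matchings sharing an edge with the cycle are a fraction `2 / m` of all.
-/

namespace Entanglement

open Finset Equiv
open scoped Fin.NatCast Fin.CommRing

section Components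

variable {V : Type*} {G : SimpleGraph V}

/-- `G - S`, with the vertices of `S` kept as isolated vertices so that its components are
finsets of `V`. -/
def isolate (G : SimpleGraph V) (S : Finset V) : SimpleGraph V where
  Adj a b := G.Adj a b ∧ a ∉ S ∧ b ∉ S
  symm := ⟨fun _ _ h => ⟨h.1.symm, h.2.2, h.2.1⟩⟩
  loopless := ⟨fun a h => G.loopless.irrefl a h.1⟩

lemma isolate_anti (G : SimpleGraph V) {S S' : Finset V} (h : S ⊆ S') :
    isolate G S' ≤ isolate G S :=
  fun _ _ hab => ⟨hab.1, fun ha => hab.2.1 (h ha), fun hb => hab.2.2 (h hb)⟩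

lemma notMem_of_reachable_isolate {S : Finset V} {a b : V}
    (h : (isolate G S).Reachable a b) (ha : a ∉ S) : b ∉ S := by
  obtain ⟨w⟩ := h
  induction w with
  | nil => exact ha
  | cons h _ ih => exact ih h.2.2

lemma reachable_isolate_insert [DecidableEq V] {S : Finset V} {a b r : V}
    (w : (isolate G S).Walk a b) (hr : r ∉ w.support) :
    (isolate G (insert r S)).Reachable a b := by
  induction w with
  | nil => rfl
  | cons h w ih =>
    simp only [SimpleGraph.Walk.support_cons, List.mem_cons, not_or] at hr
    have hc : _ ≠ r := fun h => hr.2 (h ▸ w.start_mem_support)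
    refine SimpleGraph.Adj.reachable ?_ |>.trans (ih hr.2)
    exact ⟨h.1, by simp [Ne.symm hr.1, h.2.1], by simp [hc, h.2.2]⟩

lemma exists_adj_reachable_isolate_insert [DecidableEq V] {S : Finset V} {r x : V}
    (h : (isolate G S).Reachable r x) (hrx : r ≠ x) :
    ∃ u, G.Adj r u ∧ (isolate G (insert r S)).Reachable u x := by
  obtain ⟨w⟩ := h
  obtain ⟨p, hp⟩ := w.toPath
  cases p with
  | nil => exact absurd rfl hrx
  | cons h q =>
    rw [SimpleGraph.Walk.cons_isPath_iff] at hp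
    exact ⟨_, h.1, reachable_isolate_insert q hp.2⟩

noncomputable def component [Fintype V] (G : SimpleGraph V) (v : V) : Finset V :=
  {u | G.Reachable v u}

@[simp] lemma mem_component [Fintype V] {v u : V} : u ∈ component G v ↔ G.Reachable v u := by
  simp [component]

def IsReachClosed (G : SimpleGraph V) (A : Finset V) : Prop :=
  ∀ a ∈ A, ∀ b, G.Reachable a b → b ∈ A

lemma IsReachClosed.union [DecidableEq V] {A B : Finset V} (hA : IsReachClosed G A)
    (hB : IsReachClosed G B) : IsReachClosed G (A ∪ B) := by
  intro a ha b hab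
  rcases mem_union.1 ha with ha | ha
  exacts [mem_union_left _ (hA a ha b hab), mem_union_right _ (hB a ha b hab)]

lemma IsReachClosed.compl [Fintype V] [DecidableEq V] {A : Finset V}
    (hA : IsReachClosed G A) : IsReachClosed G Aᶜ :=
  fun _ ha _ hab => mem_compl.2 fun hb => mem_compl.1 ha (hA _ hb _ hab.symm)

lemma isReachClosed_component [Fintype V] (v : V) : IsReachClosed G (component G v) :=
  fun _ ha _ hab => mem_component.2 ((mem_component.1 ha).trans hab)

lemma isReachClosed_isolate_self (G : SimpleGraph V) (S : Finset V) :
    IsReachClosed (isolate G S) S :=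
  fun _ ha _ hab => by_contra fun hb => notMem_of_reachable_isolate hab.symm hb ha

lemma IsReachClosed.mem_of_adj {S A : Finset V} (hA : IsReachClosed (isolate G S) A)
    {a b : V} (ha : a ∈ A) (haS : a ∉ S) (hbS : b ∉ S) (hab : G.Adj a b) : b ∈ A :=
  hA a ha b (SimpleGraph.Adj.reachable ⟨hab, haS, hbS⟩)

/-- A largest union of components inside `U` of size at most `x + M` has size at least `x`,
since otherwise one more component would fit. -/
lemma exists_isReachClosed_subset_card_mem [Fintype V] [DecidableEq V] {U : Finset V}
    (hU : IsReachClosed G U) {M x : ℕ} (hM : ∀ v ∈ U, #(component G v) ≤ M)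
    (hx : x ≤ #U) :
    ∃ A ⊆ U, IsReachClosed G A ∧ x ≤ #A ∧ #A ≤ x + M := by
  have hempty : IsReachClosed G ∅ := fun _ h => absurd h (notMem_empty _)
  obtain ⟨A, hA, hmax⟩ :=
    exists_max_image {A ∈ U.powerset | IsReachClosed G A ∧ #A ≤ x + M} card
      ⟨∅, mem_filter.2 ⟨empty_mem_powerset _, hempty, by simp⟩⟩
  simp only [mem_filter, mem_powerset] at hA
  refine ⟨A, hA.1, hA.2.1, not_lt.1 fun hlt => ?_, hA.2.2⟩
  obtain ⟨v, hvU, hvA⟩ := not_subset.1 fun h : U ⊆ A => by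
    have := card_le_card h; omega
  have hle := hmax (A ∪ component G v) (by
    simp only [mem_filter, mem_powerset]
    refine ⟨union_subset hA.1 fun u hu => hU v hvU u (mem_component.1 hu),
      hA.2.1.union (isReachClosed_component v), (card_union_le _ _).trans ?_⟩
    have := hM v hvU; omega)
  have hlt' : #A < #(A ∪ component G v) :=
    card_lt_card (Finset.ssubset_iff_subset_ne.2 ⟨subset_union_left, fun h =>
      hvA (h ▸ mem_union_right _ (mem_component.2 .rfl))⟩)
  omega

end Components

section Game

variable {V : Type*}

noncomputable def occupied {k : ℕ} (f : Fin k → Option V) : Finset V :=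
  (univ.image f).eraseNone

lemma mem_occupied {k : ℕ} {f : Fin k → Option V} {v : V} :
    v ∈ occupied f ↔ ∃ i, f i = some v := by
  simp [occupied]

lemma card_occupied_le {k : ℕ} (f : Fin k → Option V) : #(occupied f) ≤ k :=
  (card_eraseNone_le _).trans (card_image_le.trans (by simp))

lemma occupied_subset_of_copMove {k : ℕ} {r : V} {f f' : Fin k → Option V}
    (h : CopMove r f f') : occupied f' ⊆ insert r (occupied f) := by
  rcases h with rfl | ⟨i, rfl⟩
  · exact subset_insert _ _
  · intro v hv
    obtain ⟨j, hj⟩ := mem_occupied.1 hv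
    rcases eq_or_ne j i with rfl | hji
    · simp_all
    · rw [Function.update_of_ne hji] at hj
      exact mem_insert_of_mem (mem_occupied.2 ⟨j, hj⟩)

variable [Fintype V]

def HasMajorityComponent (G : SimpleGraph V) (c : ℕ) : Prop :=
  ∀ S : Finset V, #S ≤ c → ∃ v ∉ S, Fintype.card V < 2 * #(component (isolate G S) v)

lemma not_copsWin_of_hasMajorityComponent {G : SimpleGraph V} {k : ℕ}
    (hG : HasMajorityComponent G (k + 1)) {f : Fin k → Option V} {r : V}
    (hmaj : Fintype.card V < 2 * #(component (isolate G (occupied f)) r)) :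
    ¬ CopsWin G k f r := by
  intro hwin
  induction hwin with
  | step f r f' hmove _ ih =>
    set T := insert r (occupied f')
    obtain ⟨v, hvT, hA⟩ := hG T ((card_insert_le _ _).trans (by simp [card_occupied_le]))
    obtain ⟨x, hx⟩ := inter_nonempty_of_card_lt_card_add_card (subset_univ _) (subset_univ _)
      (by rw [card_univ]; omega : #(univ : Finset V) < #(component (isolate G T) v) +
        #(component (isolate G (occupied f)) r))
    rw [mem_inter, mem_component, mem_component] at hx
    have hxT : x ∉ T := notMem_of_reachable_isolate hx.1 hvT
    obtain ⟨u, hru, hux⟩ := exists_adj_reachable_isolate_insert hx.2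
      (fun h => hxT (h ▸ mem_insert_self r _))
    have hTsub : T ⊆ insert r (occupied f) :=
      insert_subset (mem_insert_self _ _) (occupied_subset_of_copMove hmove)
    have hvu : (isolate G T).Reachable v u := hx.1.trans (hux.mono (isolate_anti G hTsub)).symm
    have huT : u ∉ T := notMem_of_reachable_isolate hvu hvT
    refine ih u hru (fun i hi => huT (mem_insert_of_mem (mem_occupied.2 ⟨i, hi⟩)))
      (hA.trans_le (Nat.mul_le_mul_left 2 (card_le_card fun y hy => ?_)))
    rw [mem_component] at hy ⊢
    exact (hvu.symm.trans hy).mono (isolate_anti G (subset_insert _ _))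

theorem not_copsCatch_of_hasMajorityComponent {G : SimpleGraph V} {k : ℕ}
    (hG : HasMajorityComponent G (k + 1)) : ¬ CopsCatch G k := by
  intro hcatch
  obtain ⟨v, -, hv⟩ := hG ∅ (by simp)
  have hempty : occupied (fun _ : Fin k => (none : Option V)) = ∅ := by
    ext; simp [mem_occupied]
  exact not_copsWin_of_hasMajorityComponent hG (by rwa [hempty]) (hcatch v)

end Game

section Permutations

variable {α : Type*} [Fintype α] [DecidableEq α]

lemma card_perm_fixing_le (R : Finset α) :
    #{π : Perm α | ∀ y ∈ R, π y = y} ≤ (Fintype.card α - #R).factorial := by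
  calc #{π : Perm α | ∀ y ∈ R, π y = y}
      ≤ #(univ.image (Perm.ofSubtype : Perm {x // x ∉ R} → Perm α)) := by
        refine card_le_card fun π hπ => ?_
        simp only [mem_filter, mem_univ, true_and] at hπ
        have hR : ∀ x, π x ∉ R ↔ x ∉ R := fun x => by
          refine not_congr ⟨fun h => ?_, fun h => by rwa [hπ x h]⟩
          rwa [← π.injective (hπ _ h)]
        exact mem_image.2 ⟨π.subtypePerm hR, mem_univ _,
          Perm.ofSubtype_subtypePerm hR fun x hx h => hx (hπ x h)⟩
    _ ≤ Fintype.card (Perm {x // x ∉ R}) := card_image_le.trans_eq card_univ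
    _ = (Fintype.card α - #R).factorial := by
        rw [Fintype.card_perm, Fintype.card_subtype_compl, Fintype.card_coe]

lemma card_perm_mapsTo_le (P Q : Finset α) :
    #{σ : Perm α | ∀ x ∈ P, σ x ∈ Q} ≤
      (Fintype.card α - #P).factorial * (#Q).descFactorial #P := by
  refine (card_le_mul_card_image_of_maps_to (f := fun σ (x : P) => σ x)
    (t := univ.image fun (e : P ↪ Q) (x : P) => (e x : α)) ?_
    (Fintype.card α - #P).factorial ?_).trans ?_
  · intro σ hσ
    simp only [mem_filter, mem_univ, true_and] at hσ
    refine mem_image.2 ⟨⟨fun x => ⟨σ x, hσ x x.2⟩, fun a b h => ?_⟩, mem_univ _, rfl⟩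
    exact Subtype.ext (σ.injective (congrArg Subtype.val h))
  · intro g _
    rcases eq_empty_or_nonempty
        {σ ∈ {σ : Perm α | ∀ x ∈ P, σ x ∈ Q} | (fun x : P => σ x) = g}
      with h | ⟨σ₀, hσ₀⟩
    · simp [h]
    refine (card_le_card_of_injOn (fun σ => σ₀⁻¹ * σ) (fun σ hσ => ?_) ?_).trans
      (card_perm_fixing_le P)
    · simp only [coe_filter, mem_filter, mem_univ, true_and, Set.mem_ofPred_eq] at hσ hσ₀ ⊢
      intro y hy
      have := congrFun (hσ.2.trans hσ₀.2.symm) ⟨y, hy⟩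
      simp [this]
    · intro a _ b _ hab
      simpa using hab
  · refine Nat.mul_le_mul_left _ (card_image_le.trans_eq ?_)
    rw [card_univ, Fintype.card_embedding_eq, Fintype.card_coe, Fintype.card_coe]

lemma descFactorial_mul_pow_le {q n : ℕ} (hqn : q ≤ n) (p : ℕ) :
    q.descFactorial p * n ^ p ≤ n.descFactorial p * q ^ p := by
  induction p with
  | zero => simp
  | succ p ih =>
    rw [Nat.descFactorial_succ, Nat.descFactorial_succ, pow_succ, pow_succ]
    have step : (q - p) * n ≤ (n - p) * q := by
      rcases le_or_gt q p with h | h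
      · simp [Nat.sub_eq_zero_of_le h]
      · zify [h.le, h.le.trans hqn]
        nlinarith
    calc (q - p) * q.descFactorial p * (n ^ p * n)
        = ((q - p) * n) * (q.descFactorial p * n ^ p) := by ring
      _ ≤ ((n - p) * q) * (n.descFactorial p * q ^ p) := Nat.mul_le_mul step ih
      _ = (n - p) * n.descFactorial p * (q ^ p * q) := by ring

lemma card_perm_mapsTo_mul_pow_le (P Q : Finset α) :
    #{σ : Perm α | ∀ x ∈ P, σ x ∈ Q} * Fintype.card α ^ #P ≤
      (Fintype.card α).factorial * #Q ^ #P := by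
  have hP : #P ≤ Fintype.card α := card_le_univ P
  calc #{σ : Perm α | ∀ x ∈ P, σ x ∈ Q} * Fintype.card α ^ #P
      ≤ (Fintype.card α - #P).factorial * ((#Q).descFactorial #P * Fintype.card α ^ #P) := by
        rw [← mul_assoc]; exact Nat.mul_le_mul_right _ (card_perm_mapsTo_le P Q)
    _ ≤ (Fintype.card α - #P).factorial * ((Fintype.card α).descFactorial #P * #Q ^ #P) :=
        Nat.mul_le_mul_left _ (descFactorial_mul_pow_le (card_le_univ Q) _)
    _ = (Fintype.card α).factorial * #Q ^ #P := by
        rw [← mul_assoc, Nat.factorial_mul_descFactorial hP]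

end Permutations

section Arcs

variable {N : ℕ} [NeZero N]

lemma reachable_isolate_add {H : SimpleGraph (Fin N)} (hH : ∀ v, H.Adj v (v + 1))
    {S : Finset (Fin N)} (a : Fin N) (j : ℕ) (h : ∀ i ≤ j, a + (i : Fin N) ∉ S) :
    (isolate H S).Reachable a (a + j) := by
  induction j with
  | zero => simp
  | succ j ih =>
    refine (ih fun i hi => h i (by omega)).trans (SimpleGraph.Adj.reachable ?_)
    have hj := h (j + 1) le_rfl
    push_cast at hj ⊢
    exact ⟨by rw [← add_assoc]; exact hH _, h j (by omega), hj⟩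

lemma reachable_isolate_empty {H : SimpleGraph (Fin N)} (hH : ∀ v, H.Adj v (v + 1))
    (a b : Fin N) : (isolate H ∅).Reachable a b := by
  have := reachable_isolate_add hH (S := ∅) a (b - a).val (by simp)
  rwa [Fin.cast_val_eq_self, add_sub_cancel] at this

/-- `s` is the nearest vertex of `S` before `x`. -/
lemma exists_run {S : Finset (Fin N)} (hS : S.Nonempty) {x : Fin N} (hx : x ∉ S) :
    ∃ s ∈ S, ∃ d : ℕ, s + 1 + d = x ∧ ∀ i ≤ d, s + 1 + (i : Fin N) ∉ S := by
  have hex : ∃ j : ℕ, x - ((j + 1 : ℕ) : Fin N) ∈ S := by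
    obtain ⟨w, hw⟩ := hS
    have hxw : (x - w).val ≠ 0 := fun h =>
      hx (sub_eq_zero.1 (Fin.ext (by rw [h, Fin.val_zero])) ▸ hw)
    refine ⟨(x - w).val - 1, ?_⟩
    rwa [Nat.sub_add_cancel (Nat.pos_of_ne_zero hxw), Fin.cast_val_eq_self, sub_sub_cancel]
  refine ⟨_, Nat.find_spec hex, Nat.find hex, by push_cast; ring, fun i hi hmem => ?_⟩
  rcases hi.eq_or_lt with rfl | hlt
  · exact hx (by convert hmem using 1; push_cast; ring)
  · refine Nat.find_min hex (m := Nat.find hex - i - 1) (by omega) ?_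
    convert hmem using 1
    rw [Nat.sub_add_cancel (by omega), Nat.cast_sub hi]
    push_cast; ring

noncomputable def arcs (S T : Finset (Fin N)) : Finset (Fin N) :=
  {x | ∃ s ∈ T, ∃ d : ℕ, s + 1 + d = x ∧ ∀ i ≤ d, s + 1 + (i : Fin N) ∉ S}

/-- The components of `H - S` are unions of arcs of the cycle, so a union of them is encoded
by a subset of `S`. -/
lemma arcs_filter_eq {H : SimpleGraph (Fin N)} (hH : ∀ v, H.Adj v (v + 1))
    {S A : Finset (Fin N)} (hS : S.Nonempty) (hA : IsReachClosed (isolate H S) A)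
    (hAS : Disjoint A S) : arcs S {s ∈ S | s + 1 ∈ A} = A := by
  ext x
  simp only [arcs, mem_filter, mem_univ, true_and]
  constructor
  · rintro ⟨s, ⟨-, hs⟩, d, rfl, hrun⟩
    exact hA _ hs _ (reachable_isolate_add hH _ d hrun)
  · intro hx
    obtain ⟨s, hs, d, rfl, hrun⟩ := exists_run hS (disjoint_left.1 hAS hx)
    exact ⟨s, ⟨hs, hA _ hx _ (reachable_isolate_add hH _ d hrun).symm⟩, d, rfl, hrun⟩

end Arcs

section CubicGraph

variable {m : ℕ}

def pairing (σ : Perm (Fin m)) : Fin (m + m) → Fin (m + m) :=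
  Fin.addCases (fun i => Fin.natAdd m (σ i)) (fun j => Fin.castAdd m (σ.symm j))

lemma pairing_castAdd (σ : Perm (Fin m)) (i : Fin m) :
    pairing σ (Fin.castAdd m i) = Fin.natAdd m (σ i) :=
  Fin.addCases_left i

lemma pairing_natAdd (σ : Perm (Fin m)) (j : Fin m) :
    pairing σ (Fin.natAdd m j) = Fin.castAdd m (σ.symm j) :=
  Fin.addCases_right j

lemma castAdd_ne_natAdd (i j : Fin m) : Fin.castAdd m i ≠ Fin.natAdd m j := by
  rw [Ne, Fin.ext_iff]; simp; omega

lemma pairing_pairing (σ : Perm (Fin m)) (v : Fin (m + m)) : pairing σ (pairing σ v) = v := by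
  induction v using Fin.addCases with
  | left i => rw [pairing_castAdd, pairing_natAdd, symm_apply_apply]
  | right j => rw [pairing_natAdd, pairing_castAdd, apply_symm_apply]

lemma pairing_ne_self (σ : Perm (Fin m)) (v : Fin (m + m)) : pairing σ v ≠ v := by
  induction v using Fin.addCases with
  | left i => rw [pairing_castAdd]; exact (castAdd_ne_natAdd i (σ i)).symm
  | right j => rw [pairing_natAdd]; exact castAdd_ne_natAdd (σ.symm j) j

variable [NeZero m]

lemma val_add_one (v : Fin (m + m)) :
    ((v + 1 : Fin (m + m)) : ℕ) = if (v : ℕ) + 1 = m + m then (0 : ℕ) else (v : ℕ) + 1 := by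
  have := NeZero.pos m
  rw [Fin.val_add, Fin.val_one', Nat.one_mod_eq_one.2 (by omega)]
  split_ifs with h
  · rw [h, Nat.mod_self]
  · exact Nat.mod_eq_of_lt (by omega)

lemma add_one_ne_self (v : Fin (m + m)) : v + 1 ≠ v := by
  have := val_add_one v
  have := NeZero.pos m
  rw [Ne, Fin.ext_iff]; split_ifs at * <;> omega

lemma add_one_add_one_ne_self (hm : 2 ≤ m) (v : Fin (m + m)) : v + 1 + 1 ≠ v := by
  have h1 := val_add_one v
  have h2 := val_add_one (v + 1)
  rw [Ne, Fin.ext_iff]; split_ifs at * <;> omega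

def cubicGraph (σ : Perm (Fin m)) : SimpleGraph (Fin (m + m)) :=
  SimpleGraph.fromRel fun u v => v = u + 1 ∨ v = pairing σ u

lemma cubicGraph_adj_add_one (σ : Perm (Fin m)) (v : Fin (m + m)) :
    (cubicGraph σ).Adj v (v + 1) :=
  (SimpleGraph.fromRel_adj _ _ _).2 ⟨(add_one_ne_self v).symm, Or.inl (Or.inl rfl)⟩

lemma cubicGraph_adj_pairing (σ : Perm (Fin m)) (v : Fin (m + m)) :
    (cubicGraph σ).Adj v (pairing σ v) :=
  (SimpleGraph.fromRel_adj _ _ _).2 ⟨(pairing_ne_self σ v).symm, Or.inl (Or.inr rfl)⟩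

lemma card_cubicGraph_neighbors (hm : 2 ≤ m) {σ : Perm (Fin m)}
    (hσ : ∀ v, pairing σ v ≠ v + 1) (v : Fin (m + m)) :
    #{w | (cubicGraph σ).Adj v w} = 3 := by
  have hpred : pairing σ v ≠ v - 1 := fun h =>
    hσ (v - 1) (by rw [← h, pairing_pairing, h]; ring)
  have hsucc : v + 1 ≠ v - 1 := fun h =>
    add_one_add_one_ne_self hm v (by rw [h]; ring)
  have : ({w | (cubicGraph σ).Adj v w} : Finset _) = {v + 1, v - 1, pairing σ v} := by
    ext w
    simp only [mem_filter, mem_univ, true_and, mem_insert, mem_singleton, cubicGraph,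
      SimpleGraph.fromRel_adj]
    constructor
    · rintro ⟨-, (h | h) | (h | h)⟩
      · exact Or.inl h
      · exact Or.inr (Or.inr h)
      · exact Or.inr (Or.inl (by rw [h]; ring))
      · exact Or.inr (Or.inr (by rw [h, pairing_pairing]))
    · rintro (rfl | rfl | rfl)
      · exact ⟨(add_one_ne_self v).symm, Or.inl (Or.inl rfl)⟩
      · refine ⟨fun h => add_one_ne_self (v - 1) ?_, Or.inr (Or.inl (by ring))⟩
        nth_rewrite 2 [← h]; ring
      · exact ⟨(pairing_ne_self σ v).symm, Or.inl (Or.inr rfl)⟩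
  rw [this, card_insert_of_notMem, card_pair hpred.symm]
  simp [hsucc, (hσ v).symm]

/-- Only the cycle edges `(m - 1, m)` and `(m + m - 1, 0)` join the two halves. -/
lemma card_perm_exists_pairing_eq_add_one_le :
    #{σ : Perm (Fin m) | ∃ v, pairing σ v = v + 1} ≤ 2 * (m - 1).factorial := by
  have hm := NeZero.pos m
  set a : Fin m := ⟨m - 1, by omega⟩
  set b : Fin m := ⟨0, hm⟩
  have hsub : ({σ : Perm (Fin m) | ∃ v, pairing σ v = v + 1} : Finset _) ⊆
      ({σ | σ a = b} : Finset _) ∪ ({σ | σ b = a} : Finset _) := by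
    intro σ hσ
    simp only [mem_filter, mem_univ, true_and, mem_union] at hσ ⊢
    obtain ⟨v, hv⟩ := hσ
    have hval := val_add_one v
    induction v using Fin.addCases with
    | left i =>
      rw [pairing_castAdd, Fin.ext_iff, hval] at hv
      simp only [Fin.val_natAdd, Fin.val_castAdd] at hv
      have := i.isLt
      split_ifs at hv
      · omega
      · obtain rfl : i = a := Fin.ext (by simp only [a]; omega)
        exact Or.inl (Fin.ext (by simp only [b]; omega))
    | right j =>
      rw [pairing_natAdd, Fin.ext_iff, hval] at hv
      simp only [Fin.val_natAdd, Fin.val_castAdd] at hv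
      have := (σ.symm j).isLt
      split_ifs at hv
      · have hb : σ.symm j = b := Fin.ext (by simp only [b]; omega)
        exact Or.inr (by rw [← hb, apply_symm_apply]; exact Fin.ext (by simp only [a]; omega))
      · omega
  have hcard (x y : Fin m) : #{σ : Perm (Fin m) | σ x = y} ≤ (m - 1).factorial := by
    simpa using card_perm_mapsTo_le {x} {y}
  calc _ ≤ _ := card_le_card hsub
    _ ≤ _ := card_union_le _ _
    _ ≤ 2 * (m - 1).factorial := by linarith [hcard a b, hcard b a]

end CubicGraph

section Expansion

variable {m : ℕ}

def leftPart (X : Finset (Fin (m + m))) : Finset (Fin m) := {i | Fin.castAdd m i ∈ X}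

def rightPart (X : Finset (Fin (m + m))) : Finset (Fin m) := {j | Fin.natAdd m j ∈ X}

lemma card_leftPart_add_card_rightPart (X : Finset (Fin (m + m))) :
    #(leftPart X) + #(rightPart X) = #X := by
  rw [leftPart, rightPart, card_filter, card_filter, ← Fin.sum_univ_add
    (fun v => if v ∈ X then 1 else 0), ← card_filter, filter_univ_mem]

lemma le_card_leftPart_add {A B S : Finset (Fin (m + m))}
    (h : ∀ v, v ∈ A ∨ v ∈ B ∨ v ∈ S) :
    m ≤ #(leftPart A) + #(leftPart B) + #(leftPart S) := by
  calc m = #(univ : Finset (Fin m)) := by simp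
    _ ≤ #(leftPart A ∪ leftPart B ∪ leftPart S) := card_le_card fun i _ => by
        simpa [leftPart, or_assoc] using h (Fin.castAdd m i)
    _ ≤ _ := (card_union_le _ _).trans (by gcongr; exact card_union_le _ _)

lemma le_card_rightPart_add {A B S : Finset (Fin (m + m))}
    (h : ∀ v, v ∈ A ∨ v ∈ B ∨ v ∈ S) :
    m ≤ #(rightPart A) + #(rightPart B) + #(rightPart S) := by
  calc m = #(univ : Finset (Fin m)) := by simp
    _ ≤ #(rightPart A ∪ rightPart B ∪ rightPart S) := card_le_card fun i _ => by
        simpa [rightPart, or_assoc] using h (Fin.natAdd m i)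
    _ ≤ _ := (card_union_le _ _).trans (by gcongr; exact card_union_le _ _)

variable [NeZero m]

/-- `(S, T)` certifies that `σ` is bad: `A = arcs S T` and `B = (A ∪ S)ᶜ` meet a tenth of the
left and of the right half respectively, and no matching edge leaves `A` towards `B`. -/
def Separated (σ : Perm (Fin m)) (S T : Finset (Fin (m + m))) : Prop :=
  m / 10 ≤ #(leftPart (arcs S T)) ∧ m / 10 ≤ #(rightPart (arcs S T ∪ S)ᶜ) ∧
    ∀ i ∈ leftPart (arcs S T), σ i ∉ rightPart (arcs S T ∪ S)ᶜ

lemma separated_filter {σ : Perm (Fin m)} {S A : Finset (Fin (m + m))} (hS : S.Nonempty)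
    (hA : IsReachClosed (isolate (cubicGraph σ) S) A) (hAS : Disjoint A S)
    (hl : m / 10 ≤ #(leftPart A)) (hr : m / 10 ≤ #(rightPart (A ∪ S)ᶜ)) :
    Separated σ S {s ∈ S | s + 1 ∈ A} := by
  rw [Separated, arcs_filter_eq (cubicGraph_adj_add_one σ) hS hA hAS]
  refine ⟨hl, hr, fun i hi hσi => ?_⟩
  simp only [leftPart, rightPart, mem_filter, mem_univ, true_and, mem_compl, mem_union,
    not_or] at hi hσi
  refine hσi.1 (hA.mem_of_adj hi (disjoint_left.1 hAS hi) hσi.2 ?_)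
  simpa [pairing_castAdd] using cubicGraph_adj_pairing σ (Fin.castAdd m i)

/-- Group the components of `G - S` into a side `A` of size between `m / 2` and `m / 2 + m`;
then `A` or the rest `B` yields a certificate. -/
lemma exists_separated (hm : 2 ≤ m) (σ : Perm (Fin m)) {S : Finset (Fin (m + m))}
    (hS : 4 * #S ≤ m)
    (hcomp : ∀ v ∉ S, #(component (isolate (cubicGraph σ) S) v) ≤ m) :
    ∃ T ⊆ S, Separated σ S T := by
  obtain ⟨A, hAS, hA, hA1, hA2⟩ := exists_isReachClosed_subset_card_mem
    (isReachClosed_isolate_self (cubicGraph σ) S).compl (M := m) (x := m / 2)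
    (fun v hv => hcomp v (mem_compl.1 hv)) (by rw [card_compl, Fintype.card_fin]; omega)
  rw [subset_compl_iff_disjoint_right] at hAS
  have hSne : S.Nonempty := by
    rw [nonempty_iff_ne_empty]
    rintro rfl
    obtain ⟨a, ha⟩ : A.Nonempty := card_pos.1 (by omega)
    have hAuniv : A = univ := eq_univ_of_forall fun b =>
      hA a ha b (reachable_isolate_empty (cubicGraph_adj_add_one σ) a b)
    rw [hAuniv, card_univ, Fintype.card_fin] at hA2
    omega
  set B := (A ∪ S)ᶜ
  have hB : IsReachClosed (isolate (cubicGraph σ) S) B :=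
    (hA.union (isReachClosed_isolate_self _ S)).compl
  have hBS : Disjoint B S := disjoint_left.2 fun v hv hvS => by simp_all [B]
  have hBA : (B ∪ S)ᶜ = A := by
    ext v
    have := fun h : v ∈ A => disjoint_left.1 hAS h
    simp only [B, mem_compl, mem_union]
    tauto
  have hcover : ∀ v, v ∈ A ∨ v ∈ B ∨ v ∈ S := fun v => by
    simp only [B, mem_compl, mem_union]; tauto
  have hcardB : #B = m + m - #A - #S := by
    rw [card_compl, Fintype.card_fin, card_union_of_disjoint hAS, Nat.sub_sub]
  have := le_card_leftPart_add hcover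
  have := le_card_rightPart_add hcover
  have := card_leftPart_add_card_rightPart A
  have := card_leftPart_add_card_rightPart B
  have := card_leftPart_add_card_rightPart S
  rcases (by omega : (m / 10 ≤ #(leftPart A) ∧ m / 10 ≤ #(rightPart B)) ∨
      (m / 10 ≤ #(leftPart B) ∧ m / 10 ≤ #(rightPart A))) with ⟨hl, hr⟩ | ⟨hl, hr⟩
  · exact ⟨_, filter_subset _ _, separated_filter hSne hA hAS hl hr⟩
  · exact ⟨_, filter_subset _ _, separated_filter hSne hB hBS hl (hBA ▸ hr)⟩

lemma card_separated_le (S T : Finset (Fin (m + m))) :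
    (#{σ | Separated σ S T} : ℝ) ≤
      m.factorial * (1 - ((m / 10 : ℕ) : ℝ) / m) ^ (m / 10) := by
  set t := m / 10
  have hm : (0 : ℝ) < m := by exact_mod_cast NeZero.pos m
  have htm : (t : ℝ) ≤ m := by exact_mod_cast (show t ≤ m by omega)
  have h0 : 0 ≤ 1 - (t : ℝ) / m := by rw [sub_nonneg, div_le_one hm]; exact htm
  rcases eq_empty_or_nonempty ({σ | Separated σ S T} : Finset (Perm (Fin m)))
    with h | ⟨σ₀, hσ₀⟩
  · rw [h, card_empty, Nat.cast_zero]; positivity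
  obtain ⟨hl, hr, -⟩ := (mem_filter.1 hσ₀).2
  set P := leftPart (arcs S T)
  set R := rightPart (arcs S T ∪ S)ᶜ
  have hcount := card_perm_mapsTo_mul_pow_le P Rᶜ
  rw [Fintype.card_fin, card_compl, Fintype.card_fin] at hcount
  replace hcount := (Nat.mul_le_mul_right _ (card_le_card
    (s := ({σ | Separated σ S T} : Finset (Perm (Fin m)))) fun σ hσ => by
      simp only [mem_filter, mem_univ, true_and, mem_compl] at hσ ⊢
      exact hσ.2.2)).trans hcount
  have hq : ((m - #R : ℕ) : ℝ) / m ≤ 1 - t / m := by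
    rw [Nat.cast_sub (card_le_univ R |>.trans_eq (Fintype.card_fin m)), sub_div, div_self hm.ne']
    gcongr
  calc (#{σ | Separated σ S T} : ℝ) ≤ m.factorial * (((m - #R : ℕ) : ℝ) / m) ^ #P := by
        rw [div_pow, mul_div_assoc', le_div_iff₀ (by positivity)]
        exact_mod_cast hcount
    _ ≤ m.factorial * (1 - (t : ℝ) / m) ^ #P := by gcongr
    _ ≤ m.factorial * (1 - (t : ℝ) / m) ^ t := by
        refine mul_le_mul_of_nonneg_left (pow_le_pow_of_le_one h0 ?_ hl) (Nat.cast_nonneg _)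
        linarith [div_nonneg (Nat.cast_nonneg t) hm.le]

end Expansion

section Counting

lemma sum_pow_card_le (ι : Type*) [Fintype ι] (c : ℕ) {x y : ℝ} (hx : 0 ≤ x) (hy : 0 < y)
    (hy1 : y ≤ 1) :
    ∑ S : Finset ι with #S ≤ c, x ^ #S ≤ (1 + x * y) ^ Fintype.card ι / y ^ c := by
  calc ∑ S : Finset ι with #S ≤ c, x ^ #S
      ≤ ∑ S : Finset ι with #S ≤ c, (x * y) ^ #S / y ^ c := by
        refine sum_le_sum fun S hS => ?_
        rw [mul_pow, mul_div_assoc]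
        refine le_mul_of_one_le_right (pow_nonneg hx _) ((one_le_div (by positivity)).2 ?_)
        exact pow_le_pow_of_le_one hy.le hy1 (mem_filter.1 hS).2
    _ ≤ ∑ S : Finset ι, (x * y) ^ #S / y ^ c :=
        sum_le_sum_of_subset_of_nonneg (filter_subset _ _) fun _ _ _ => by positivity
    _ = (1 + x * y) ^ Fintype.card ι / y ^ c := by
        rw [← sum_div, ← powerset_univ, ← card_univ, add_comm, ← sum_pow_mul_eq_add_pow]
        simp

lemma one_add_pow_div_pow_mul_one_sub_pow_le_half (m c : ℕ) (hm : 5000 ≤ m)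
    (hc : 5000 * c ≤ m + 5000) :
    (1 + 2 * (1 / 1024) : ℝ) ^ (m + m) / (1 / 1024) ^ c *
      (1 - ((m / 10 : ℕ) : ℝ) / m) ^ (m / 10) ≤ 1 / 2 := by
  set t := m / 10 with ht
  have hmt : (m : ℝ) ≤ 10 * t + 9 := by exact_mod_cast (show m ≤ 10 * t + 9 by omega)
  have hm0 : (5000 : ℝ) ≤ m := by exact_mod_cast hm
  have hcR : 5000 * (c : ℝ) ≤ m + 5000 := by exact_mod_cast hc
  have h1 : (1 + 2 * (1 / 1024) : ℝ) ^ (m + m) ≤ Real.exp (m / 256) := by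
    calc (1 + 2 * (1 / 1024) : ℝ) ^ (m + m) ≤ Real.exp (1 / 512) ^ (m + m) := by
          gcongr; linarith [Real.add_one_le_exp (1 / 512)]
      _ = Real.exp (m / 256) := by rw [← Real.exp_nat_mul]; push_cast; ring_nf
  have h2 : 1 / (1 / 1024 : ℝ) ^ c ≤ Real.exp (10 * c) := by
    calc 1 / (1 / 1024 : ℝ) ^ c = (2 ^ 10) ^ c := by rw [one_div_pow, one_div_one_div]; norm_num
      _ ≤ (Real.exp 1 ^ 10) ^ c := by gcongr; linarith [Real.add_one_le_exp 1]
      _ = Real.exp (10 * c) := by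
          rw [← Real.exp_nat_mul, ← Real.exp_nat_mul]; push_cast; ring_nf
  have htm : (t : ℝ) ≤ m := by exact_mod_cast (show t ≤ m by omega)
  have h0 : 0 ≤ 1 - (t : ℝ) / m := by rw [sub_nonneg, div_le_one (by positivity)]; exact htm
  have h3 : (1 - (t : ℝ) / m) ^ t ≤ Real.exp (-(t * t / m)) := by
    calc (1 - (t : ℝ) / m) ^ t ≤ Real.exp (-(t / m)) ^ t :=
          pow_le_pow_left₀ h0 (Real.one_sub_le_exp_neg _) _
      _ = Real.exp (-(t * t / m)) := by rw [← Real.exp_nat_mul]; ring_nf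
  have key : (m : ℝ) / 256 + 10 * c - t * t / m ≤ -1 := by
    have : (m : ℝ) * (m / 256 + 10 * c + 1) ≤ t * t := by nlinarith
    have : (m : ℝ) / 256 + 10 * c + 1 ≤ t * t / m :=
      (le_div_iff₀ (by positivity)).2 (by linarith)
    linarith
  calc (1 + 2 * (1 / 1024) : ℝ) ^ (m + m) / (1 / 1024) ^ c * (1 - (t : ℝ) / m) ^ t
      = (1 + 2 * (1 / 1024) : ℝ) ^ (m + m) * (1 / (1 / 1024) ^ c) * (1 - (t : ℝ) / m) ^ t := by
        ring
    _ ≤ Real.exp (m / 256) * Real.exp (10 * c) * Real.exp (-(t * t / m)) := by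
        have := pow_nonneg h0 t
        gcongr
    _ = Real.exp (m / 256 + 10 * c - t * t / m) := by
        rw [← Real.exp_add, ← Real.exp_add, sub_eq_add_neg]
    _ ≤ Real.exp (-1) := Real.exp_le_exp.2 key
    _ ≤ 1 / 2 := by
        rw [Real.exp_neg, one_div]
        exact inv_anti₀ two_pos (by linarith [Real.add_one_le_exp 1])

lemma card_exists_separated_le {m c : ℕ} [NeZero m] (hm : 5000 ≤ m)
    (hc : 5000 * c ≤ m + 5000) :
    (#{σ : Perm (Fin m) | ∃ S : Finset (Fin (m + m)), #S ≤ c ∧ ∃ T ⊆ S,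
      Separated σ S T} : ℝ) ≤ m.factorial / 2 := by
  set t := m / 10
  have hsub : ({σ : Perm (Fin m) | ∃ S : Finset (Fin (m + m)), #S ≤ c ∧ ∃ T ⊆ S,
      Separated σ S T} : Finset _) ⊆ ({S : Finset (Fin (m + m)) | #S ≤ c} : Finset _).biUnion
        fun S => S.powerset.biUnion fun T => {σ | Separated σ S T} := fun σ hσ => by
    simpa using hσ
  have hsum := sum_pow_card_le (Fin (m + m)) c (x := 2) (y := 1 / 1024) (by norm_num)
    (by norm_num) (by norm_num)
  rw [Fintype.card_fin] at hsum
  have htm : (t : ℝ) ≤ m := by exact_mod_cast Nat.div_le_self m 10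
  have hprob : 0 ≤ (1 - (t : ℝ) / m) ^ t :=
    pow_nonneg (sub_nonneg.2 (div_le_one_of_le₀ htm (Nat.cast_nonneg _))) _
  calc (#{σ : Perm (Fin m) | ∃ S : Finset (Fin (m + m)), #S ≤ c ∧ ∃ T ⊆ S,
        Separated σ S T} : ℝ)
      ≤ ∑ S : Finset (Fin (m + m)) with #S ≤ c, ∑ T ∈ S.powerset,
          (#{σ | Separated σ S T} : ℝ) := by
        exact_mod_cast (card_le_card hsub).trans
          (card_biUnion_le.trans (sum_le_sum fun S _ => card_biUnion_le))
    _ ≤ ∑ S : Finset (Fin (m + m)) with #S ≤ c, ∑ T ∈ S.powerset,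
          (m.factorial * (1 - (t : ℝ) / m) ^ t) := by
        gcongr with S _ T _; exact card_separated_le S T
    _ = (∑ S : Finset (Fin (m + m)) with #S ≤ c, (2 : ℝ) ^ #S) *
          (m.factorial * (1 - (t : ℝ) / m) ^ t) := by
        simp [sum_mul, card_powerset]
    _ ≤ (1 + 2 * (1 / 1024)) ^ (m + m) / (1 / 1024) ^ c *
          (m.factorial * (1 - (t : ℝ) / m) ^ t) := by
        gcongr
    _ = m.factorial * ((1 + 2 * (1 / 1024)) ^ (m + m) / (1 / 1024) ^ c *
          (1 - (t : ℝ) / m) ^ t) := by ring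
    _ ≤ m.factorial * (1 / 2) := by
        gcongr; exact one_add_pow_div_pow_mul_one_sub_pow_le_half m c hm hc
    _ = m.factorial / 2 := by ring

lemma exists_perm_hasMajorityComponent {m c : ℕ} [NeZero m] (hm : 5000 ≤ m)
    (hc : 5000 * c ≤ m + 5000) :
    ∃ σ : Perm (Fin m), (∀ v, pairing σ v ≠ v + 1) ∧
      HasMajorityComponent (cubicGraph σ) c := by
  by_contra! h
  set Dup : Finset (Perm (Fin m)) := {σ | ∃ v, pairing σ v = v + 1}
  set Bad : Finset (Perm (Fin m)) :=
    {σ | ∃ S : Finset (Fin (m + m)), #S ≤ c ∧ ∃ T ⊆ S, Separated σ S T}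
  have hcover : univ ⊆ Dup ∪ Bad := by
    intro σ _
    simp only [Dup, Bad, mem_union, mem_filter, mem_univ, true_and]
    refine or_iff_not_imp_left.2 fun hσ => ?_
    obtain ⟨S, hS, hsmall⟩ := by
      simpa [HasMajorityComponent, Fintype.card_fin] using h σ (by simpa using hσ)
    exact ⟨S, hS, exists_separated (by omega) σ (by omega) fun v hv => by
      have := hsmall v hv; omega⟩
  have hcard : (m.factorial : ℝ) ≤ #Dup + #Bad := by
    have := (card_le_card hcover).trans (card_union_le _ _)
    rw [card_univ, Fintype.card_perm, Fintype.card_fin] at this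
    exact_mod_cast this
  have hDup : (#Dup : ℝ) ≤ 2 * (m - 1).factorial := by
    exact_mod_cast card_perm_exists_pairing_eq_add_one_le
  have hfact : (8 * (m - 1).factorial : ℝ) ≤ m.factorial := by
    rw [← Nat.mul_factorial_pred (by omega : m ≠ 0)]
    exact_mod_cast Nat.mul_le_mul_right _ (by omega)
  have hpos : (0 : ℝ) < (m - 1).factorial := by exact_mod_cast Nat.factorial_pos _
  linarith [card_exists_separated_le hm hc]

end Counting

end Entanglement

/-- There is an `α > 0` and an `n₀ ∈ ℕ` such that for every even
`n ≥ n₀` there is a 3-regular simple graph on `n` vertices on which `⌊αn⌋` cops do not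
suffice to catch the robber in the entanglement game. -/
theorem statement_2 :
    ∃ α : ℝ, 0 < α ∧ ∃ n₀ : ℕ, ∀ n : ℕ, Even n → n₀ ≤ n →
      ∃ G : SimpleGraph (Fin n),
        (∀ v : Fin n, (Finset.univ.filter (fun w => G.Adj v w)).card = 3) ∧
        ¬ CopsCatch G (Nat.floor (α * n)) := by
  refine ⟨1 / 10000, by norm_num, 10000, fun n ⟨m, hnm⟩ hn => ?_⟩
  subst hnm
  have : NeZero m := ⟨by omega⟩
  set y := (1 / 10000 : ℝ) * ((m + m : ℕ) : ℝ) with hy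
  have hk : 5000 * (⌊y⌋₊ + 1) ≤ m + 5000 := by
    have h : (⌊y⌋₊ : ℝ) ≤ (m + m) / 10000 :=
      (Nat.floor_le (by positivity)).trans_eq (by rw [hy]; push_cast; ring)
    have : ((5000 * ⌊y⌋₊ : ℕ) : ℝ) ≤ m := by push_cast; linarith
    have : 5000 * ⌊y⌋₊ ≤ m := by exact_mod_cast this
    omega
  obtain ⟨σ, hσ, hmaj⟩ := Entanglement.exists_perm_hasMajorityComponent (by omega) hk
  exact ⟨_, Entanglement.card_cubicGraph_neighbors (by omega) hσ,
    Entanglement.not_copsCatch_of_hasMajorityComponent hmaj⟩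
end

section
/- For every n ≥ 1, six cops suffice to catch the robber in the entanglement game on the graph DGₙ. -/
/-- The graph `DGₙ` on vertex set `ℤ/(2n)ℤ`: a Hamilton cycle (edges `{i, i+1}`)
together with all diagonal edges `{i, i+n}` joining every vertex to its antipode. -/
def DG (n : ℕ) : SimpleGraph (ZMod (2 * n)) :=
  SimpleGraph.fromRel (fun i j => j = i + 1 ∨ j = i + (n : ZMod (2 * n)))

theorem exists_spare_cop {V : Type*} {k : ℕ} {f : Fin k → Option V} {L : List V}
    (hL : L.length < k) (hf : ∀ v ∈ L, ∃ i, f i = some v) :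
    ∃ i, ∀ v ∈ L, ∃ j ≠ i, f j = some v := by
  classical
  have : Nonempty (Fin k) := ⟨⟨0, by omega⟩⟩
  choose! g hg using hf
  obtain ⟨i, -, hi⟩ := Finset.exists_mem_notMem_of_card_lt_card
    (s := L.toFinset.image g) (t := Finset.univ)
    (by simpa using Finset.card_image_le.trans_lt (L.toFinset_card_le.trans_lt hL))
  exact ⟨i, fun v hv => ⟨g v, fun h => hi (h ▸ by simpa using ⟨v, hv, rfl⟩), hg v hv⟩⟩

/-- In position `(μ, L, r)`, once a cop has been flown onto the robber, so that `r :: L` is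
guarded, every move of the robber leads to a position of smaller rank guarded by part of it. -/
def ForcesDescent {V : Type*} (G : SimpleGraph V) (P : ℕ → List V → V → Prop) (μ : ℕ)
    (L : List V) (r : V) : Prop :=
  ∀ u, G.Adj r u → u ∉ L → ∃ ν < μ, ∃ L' ⊆ r :: L, P ν L' u

theorem CopsWin.of_forcesDescent {V : Type*} {G : SimpleGraph V} {k : ℕ}
    (P : ℕ → List V → V → Prop)
    (hP : ∀ μ L r, P μ L r → L.length < k ∧ ForcesDescent G P μ L r)
    {μ : ℕ} {L : List V} {r : V} {f : Fin k → Option V} (hstate : P μ L r)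
    (hf : ∀ v ∈ L, ∃ i, f i = some v) : CopsWin G k f r := by
  induction μ using Nat.strong_induction_on generalizing L r f with
  | _ μ ih =>
  obtain ⟨hlen, hdesc⟩ := hP μ L r hstate
  obtain ⟨i, hi⟩ := exists_spare_cop hlen hf
  have hf' : ∀ v ∈ r :: L, ∃ j, Function.update f i (some r) j = some v := by
    rintro v (_ | ⟨_, hv⟩)
    · exact ⟨i, Function.update_self i _ f⟩
    · obtain ⟨j, hji, hj⟩ := hi v hv
      exact ⟨j, by rwa [Function.update_of_ne hji]⟩
  refine .step f r _ (.inr ⟨i, rfl⟩) fun u hadj hfree => ?_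
  have hu : u ∉ L := fun hu => by
    obtain ⟨j, hj⟩ := hf' u (List.mem_cons_of_mem r hu)
    exact hfree j hj
  obtain ⟨ν, hν, L', hL', hstate'⟩ := hdesc u hadj hu
  exact ih ν hν hstate' fun v hv => hf' v (hL' hv)

namespace DG

variable {n : ℕ}

theorem natCast_add_self : (n : ZMod (2 * n)) + n = 0 := by
  simpa [two_mul] using ZMod.natCast_self (2 * n)

theorem mul_natCast_of_sign {s : ZMod (2 * n)} (hs : s = 1 ∨ s = -1) : s * n = n := by
  rcases hs with rfl | rfl
  · exact one_mul _
  · linear_combination -natCast_add_self (n := n)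

theorem exists_sign_of_adj {x u : ZMod (2 * n)} (h : (DG n).Adj x u) :
    (∃ s, (s = 1 ∨ s = -1) ∧ u = x + s) ∨ u = x + n := by
  rw [DG, SimpleGraph.fromRel_adj] at h
  rcases h.2 with (h | h) | (h | h)
  · exact .inl ⟨1, .inl rfl, h⟩
  · exact .inr h
  · exact .inl ⟨-1, .inr rfl, by linear_combination -h⟩
  · exact .inr (by linear_combination -h - natCast_add_self (n := n))

theorem eq_of_adj_of_sign {a s k u : ZMod (2 * n)} (hs : s = 1 ∨ s = -1)
    (h : (DG n).Adj (a + s * k) u) :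
    u = a + s * (k + 1) ∨ u = a + s * (k - 1) ∨ u = a + s * k + n := by
  rcases exists_sign_of_adj h with ⟨s', hs', rfl⟩ | rfl
  · rcases hs with rfl | rfl <;> rcases hs' with rfl | rfl
    · exact .inl (by ring)
    · exact .inr (.inl (by ring))
    · exact .inr (.inl (by ring))
    · exact .inl (by ring)
  · exact .inr (.inr rfl)

/-- `Position n μ L r`: the robber is on `r`, the cops guard `L`, and `μ` is the rank. Vertices
are written `a + s * k` with a direction `s = ±1`; in a `ladder` or `cross` position the robber is
confined between the guarded rungs `{a, a + n}` and `{a + s * m, a + s * m + n}`, and `cross` is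
the moment right after he took the diagonal of rung `j`. -/
inductive Position (n : ℕ) : ℕ → List (ZMod (2 * n)) → ZMod (2 * n) → Prop
  | start (r) : Position n (n * n + 2 * n) [] r
  | run (a s : ZMod (2 * n)) (t : ℕ) {r} (hs : s = 1 ∨ s = -1) (ht : 1 ≤ t) (htn : t < n)
      (hr : r = a + s * t) : Position n (n * n + n + (n - t)) [a, a + s * (t - 1)] r
  | wall (r) : Position n (n * n + n) [r + n] r
  | ladder (a s : ZMod (2 * n)) (m j : ℕ) {r} (hs : s = 1 ∨ s = -1) (hj : 1 ≤ j) (hjm : j < m)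
      (hmn : m ≤ n) (hr : r = a + s * j) :
      Position n (n * m + (m - j)) [a, a + n, a + s * m, a + s * m + n, a + s * (j - 1)] r
  | cross (a s : ZMod (2 * n)) (m j : ℕ) (hs : s = 1 ∨ s = -1) (hj : 1 ≤ j) (hjm : j < m)
      (hmn : m ≤ n) :
      Position n (n * m) [a, a + n, a + s * m, a + s * m + n, a + s * j] (a + s * j + n)

theorem Position.length_lt {μ : ℕ} {L : List (ZMod (2 * n))} {r : ZMod (2 * n)}
    (h : Position n μ L r) : L.length < 6 := by
  cases h <;> simp

theorem forcesDescent_start (hn : 1 ≤ n) (r : ZMod (2 * n)) :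
    ForcesDescent (DG n) (Position n) (n * n + 2 * n) [] r := by
  intro u hadj _
  have := natCast_add_self (n := n)
  rcases exists_sign_of_adj hadj with ⟨s, hs, rfl⟩ | rfl
  · rcases hn.lt_or_eq with hn | rfl
    · exact ⟨_, by omega, _, by grind, .run r s 1 hs le_rfl hn (by ring)⟩
    · exact ⟨_, by omega, _, by grind, .wall _⟩
  · exact ⟨_, by omega, _, by grind, .wall _⟩

theorem forcesDescent_run {a s : ZMod (2 * n)} {t : ℕ} (hs : s = 1 ∨ s = -1) (ht : 1 ≤ t)
    (htn : t < n) :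
    ForcesDescent (DG n) (Position n) (n * n + n + (n - t)) [a, a + s * (t - 1)] (a + s * t) := by
  intro u hadj hu
  have := natCast_add_self (n := n)
  have := mul_natCast_of_sign hs
  rcases eq_of_adj_of_sign hs hadj with rfl | rfl | rfl
  · rcases (Nat.succ_le_of_lt htn).lt_or_eq with htn' | rfl
    · exact ⟨_, by omega, _, by grind,
        .run a s (t + 1) hs (by omega) htn' (by push_cast; ring)⟩
    · exact ⟨_, by omega, _, by grind, .wall _⟩
  · grind
  · exact ⟨_, by omega, _, by grind, .wall _⟩

theorem forcesDescent_wall (hn : 1 ≤ n) (r : ZMod (2 * n)) :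
    ForcesDescent (DG n) (Position n) (n * n + n) [r + n] r := by
  intro u hadj hu
  have := natCast_add_self (n := n)
  rcases exists_sign_of_adj hadj with ⟨s, hs, rfl⟩ | rfl
  · have := mul_natCast_of_sign hs
    rcases hn.lt_or_eq with hn | rfl
    -- the segment from the wall rung all the way around the ladder back to itself
    · exact ⟨_, by omega, _, by grind, .ladder r s n 1 hs le_rfl hn le_rfl (by ring)⟩
    · grind
  · grind

theorem forcesDescent_ladder {a s : ZMod (2 * n)} {m j : ℕ} (hs : s = 1 ∨ s = -1) (hj : 1 ≤ j)
    (hjm : j < m) (hmn : m ≤ n) :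
    ForcesDescent (DG n) (Position n) (n * m + (m - j))
      [a, a + n, a + s * m, a + s * m + n, a + s * (j - 1)] (a + s * j) := by
  intro u hadj hu
  rcases eq_of_adj_of_sign hs hadj with rfl | rfl | rfl
  · rcases (Nat.succ_le_of_lt hjm).lt_or_eq with hjm' | rfl
    · exact ⟨_, by omega, _, by grind,
        .ladder a s m (j + 1) hs (by omega) hjm' hmn (by push_cast; ring)⟩
    · grind
  · grind
  · exact ⟨_, by omega, _, by grind, .cross a s m j hs hj hjm hmn⟩

theorem forcesDescent_cross {a s : ZMod (2 * n)} {m j : ℕ} (hs : s = 1 ∨ s = -1) (hj : 1 ≤ j)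
    (hjm : j < m) (hmn : m ≤ n) :
    ForcesDescent (DG n) (Position n) (n * m)
      [a, a + n, a + s * m, a + s * m + n, a + s * j] (a + s * j + n) := by
  intro u hadj hu
  have := natCast_add_self (n := n)
  have := mul_natCast_of_sign hs
  obtain ⟨d, rfl⟩ := Nat.exists_eq_add_of_lt hjm
  have hrank : n * (j + d + 1) = n * j + n * (d + 1) := by ring
  rw [add_right_comm] at hadj
  -- the rung `j` is now fully guarded and becomes the near end of a shorter segment
  rcases eq_of_adj_of_sign hs hadj with rfl | rfl | rfl
  · rcases Nat.eq_zero_or_pos d with rfl | hd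
    · grind
    · have : n ≤ n * j := Nat.le_mul_of_pos_right n hj
      exact ⟨_, by omega, _, by grind, .ladder (a + s * j + n : ZMod (2 * n)) s (d + 1) 1 hs
        le_rfl (by omega) (by omega) (by push_cast; ring)⟩
  · rcases hj.lt_or_eq with hj | rfl
    · have : n ≤ n * (d + 1) := Nat.le_mul_of_pos_right n (by omega)
      exact ⟨_, by omega, _, by grind, .ladder (a + s * j + n : ZMod (2 * n)) (-s) j 1
        (by grind) le_rfl hj (by omega) (by push_cast; ring)⟩
    · grind
  · grind

theorem Position.forcesDescent (hn : 1 ≤ n) {μ : ℕ} {L : List (ZMod (2 * n))}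
    {r : ZMod (2 * n)} (h : Position n μ L r) : ForcesDescent (DG n) (Position n) μ L r := by
  rcases h with r | ⟨a, s, t, hs, ht, htn, rfl⟩ | r | ⟨a, s, m, j, hs, hj, hjm, hmn, rfl⟩ |
    ⟨a, s, m, j, hs, hj, hjm, hmn⟩
  · exact forcesDescent_start hn r
  · exact forcesDescent_run hs ht htn
  · exact forcesDescent_wall hn r
  · exact forcesDescent_ladder hs hj hjm hmn
  · exact forcesDescent_cross hs hj hjm hmn

end DG

/-- For every `n ≥ 1`, six cops suffice to catch the robber in the
entanglement game on `DGₙ`. -/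
theorem statement_3 : ∀ n : ℕ, 1 ≤ n → CopsCatch (DG n) 6 := by
  intro n hn r
  exact CopsWin.of_forcesDescent (DG.Position n)
    (fun _ _ _ h => ⟨h.length_lt, h.forcesDescent hn⟩) (.start r) (by simp)
end

section
/- Let 0 < α < 1 and let G = (V, E) be an α-robust finite simple graph. Then ⌊α|V|⌋ − 2 cops are not sufficient to catch the robber in the entanglement game on G (the robber has a winning strategy against ⌊α|V|⌋ − 2 cops). -/
/-- `G` is `α`-robust: every vertex subset `X` of size at least `(1-α)n` (where `n` is
the number of vertices of `G`) induces a subgraph containing a connected component with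
more than `|X|/2` vertices (equivalently, a connected subset `Y ⊆ X` with `|Y| > |X|/2`). -/
def IsRobust {V : Type*} [Fintype V] (α : ℝ) (G : SimpleGraph V) : Prop :=
  ∀ X : Finset V, (1 - α) * (Fintype.card V : ℝ) ≤ (X.card : ℝ) →
    ∃ Y : Finset V, Y ⊆ X ∧ (X.card : ℝ) / 2 < (Y.card : ℝ) ∧
      (G.induce (Y : Set V)).Connected

/-!
The robber keeps the invariant that his component in the graph induced by the cop-free
vertices contains more than half of them. After any cop move the new free set `X'` contains
the old one `X` minus the robber's vertex `r`, and is not larger than `X`. Robustness, applied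
to `X'` or to `X \ {r}` according to the parity of `|X|`, gives a connected majority of `X'`
that meets the robber's old component away from `r`, and he steps towards it. With at most
`⌊α n⌋ - 2` cops every free set has at least `(1 - α) n + 2` vertices, so robustness
applies to both sets.
-/

namespace SimpleGraph

variable {V : Type*} {G : SimpleGraph V}

/-- Reachability inside `X`, stated on `V` rather than on the subtype of `G.induce X`, so that
no coercions appear when `X` changes. -/
def ReachIn (G : SimpleGraph V) (X : Set V) : V → V → Prop :=
  Relation.ReflTransGen fun a b => G.Adj a b ∧ a ∈ X ∧ b ∈ X

lemma ReachIn.mono {X Y : Set V} (h : X ⊆ Y) {a b : V} (hab : G.ReachIn X a b) :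
    G.ReachIn Y a b :=
  Relation.ReflTransGen.mono (fun _ _ h' => ⟨h'.1, h h'.2.1, h h'.2.2⟩) _ _ hab

lemma Connected.reachIn_of_induce {Y : Set V} (hY : (G.induce Y).Connected) {a b : V}
    (ha : a ∈ Y) (hb : b ∈ Y) : G.ReachIn Y a b := by
  have h := (reachable_iff_reflTransGen _ _).1 (hY.preconnected ⟨a, ha⟩ ⟨b, hb⟩)
  exact h.lift Subtype.val fun x y hxy => ⟨hxy, x.2, y.2⟩

lemma ReachIn.exists_adj_reachIn_diff {X : Set V} {r y : V} (h : G.ReachIn X r y)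
    (hy : y ≠ r) : ∃ w, G.Adj r w ∧ w ∈ X ∧ G.ReachIn (X \ {r}) w y := by
  induction h with
  | refl => exact absurd rfl hy
  | @tail b c _ hbc ih =>
    by_cases hbr : b = r
    · subst hbr
      exact ⟨c, hbc.1, hbc.2.2, .refl⟩
    · obtain ⟨w, hrw, hwX, hwy⟩ := ih hbr
      exact ⟨w, hrw, hwX, hwy.tail ⟨hbc.1, ⟨hbc.2.1, hbr⟩, ⟨hbc.2.2, hy⟩⟩⟩

open scoped Classical in
/-- The vertex set of the connected component of `r` in `G.induce X` (empty if `r ∉ X`). -/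
noncomputable def componentIn (G : SimpleGraph V) (X : Finset V) (r : V) : Finset V :=
  X.filter (G.ReachIn X r)

lemma mem_componentIn {X : Finset V} {r u : V} :
    u ∈ G.componentIn X r ↔ u ∈ X ∧ G.ReachIn X r u := by
  classical
  simp [componentIn]

lemma componentIn_subset (X : Finset V) (r : V) : G.componentIn X r ⊆ X := fun _ hu =>
  (mem_componentIn.1 hu).1

lemma subset_componentIn {X Y : Finset V} {r y : V} (hYX : Y ⊆ X)
    (hY : (G.induce (Y : Set V)).Connected) (hy : y ∈ Y) (hry : G.ReachIn X r y) :
    Y ⊆ G.componentIn X r := fun _ hu =>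
  mem_componentIn.2 ⟨hYX hu, Relation.ReflTransGen.trans hry <|
    (hY.reachIn_of_induce hy hu).mono (Finset.coe_subset.2 hYX)⟩

/-- A walk inside `X` from `r` to `y` leaves `r` at its first step and then stays in
`X \ {r} ⊆ X'`. -/
lemma exists_adj_subset_componentIn [DecidableEq V] {X X' Y : Finset V} {r y : V}
    (hXX' : X.erase r ⊆ X') (hYX' : Y ⊆ X') (hY : (G.induce (Y : Set V)).Connected)
    (hyY : y ∈ Y) (hyr : y ≠ r) (hyC : y ∈ G.componentIn X r) :
    ∃ w, G.Adj r w ∧ w ∈ X' ∧ Y ⊆ G.componentIn X' w := by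
  obtain ⟨w, hrw, hwX, hwy⟩ := (mem_componentIn.1 hyC).2.exists_adj_reachIn_diff hyr
  have hdiff : (X : Set V) \ {r} ⊆ X' := fun v hv =>
    hXX' (Finset.mem_erase.2 ⟨hv.2, hv.1⟩)
  exact ⟨w, hrw, hXX' (Finset.mem_erase.2 ⟨hrw.ne.symm, hwX⟩),
    subset_componentIn hYX' hY hyY (hwy.mono hdiff)⟩

end SimpleGraph

open Finset SimpleGraph

section Robust

variable {V : Type*} [Fintype V] {α : ℝ} {G : SimpleGraph V}

lemma IsRobust.exists_connected_majority (hG : IsRobust α G) {X : Finset V}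
    (hX : (1 - α) * Fintype.card V ≤ (#X : ℝ)) :
    ∃ Y ⊆ X, #X < 2 * #Y ∧ (G.induce (Y : Set V)).Connected := by
  obtain ⟨Y, hYX, hcard, hY⟩ := hG X hX
  exact ⟨Y, hYX, by exact_mod_cast (by linarith : (#X : ℝ) < 2 * #Y), hY⟩

lemma IsRobust.exists_adj_majority [DecidableEq V] (hG : IsRobust α G) {X X' : Finset V}
    {r : V} (hX : (1 - α) * Fintype.card V + 1 ≤ (#X : ℝ)) (hr : r ∈ X)
    (hC : #X < 2 * #(G.componentIn X r)) (hXX' : X.erase r ⊆ X') (hX'X : #X' ≤ #X) :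
    ∃ w, G.Adj r w ∧ w ∈ X' ∧ #X' < 2 * #(G.componentIn X' w) := by
  set C := G.componentIn X r
  have hrC : r ∈ C := mem_componentIn.2 ⟨hr, .refl⟩
  have hXr : #(X.erase r) + 1 = #X := card_erase_add_one hr
  have hCr : #(C.erase r) + 1 = #C := card_erase_add_one hrC
  have hCrX : C.erase r ⊆ X.erase r := erase_subset_erase r (componentIn_subset X r)
  suffices ∃ Y ⊆ X', (G.induce (Y : Set V)).Connected ∧ #X' < 2 * #Y ∧
      (Y ∩ C.erase r).Nonempty by
    obtain ⟨Y, hYX', hY, hcard, y, hy⟩ := this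
    obtain ⟨hyY, hyC⟩ := mem_inter.1 hy
    obtain ⟨w, hrw, hw, hYw⟩ :=
      exists_adj_subset_componentIn hXX' hYX' hY hyY (ne_of_mem_erase hyC)
        (mem_of_mem_erase hyC)
    exact ⟨w, hrw, hw, hcard.trans_le (by gcongr)⟩
  have hXr_large : (1 - α) * Fintype.card V ≤ (#(X.erase r) : ℝ) := by
    rw [← hXr] at hX
    push_cast at hX
    linarith
  -- If `#X` is even, `C` has a vertex to spare and a majority of `X'` meets `C \ {r}`;
  -- if `#X` is odd, a majority of `X \ {r}` is also a majority of `X'`.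
  by_cases hspare : #X + 2 ≤ 2 * #C
  · obtain ⟨Y, hYX', hcard, hY⟩ := hG.exists_connected_majority
      (hXr_large.trans (by exact_mod_cast card_le_card hXX'))
    exact ⟨Y, hYX', hY, hcard,
      inter_nonempty_of_card_lt_card_add_card hYX' (hCrX.trans hXX') (by omega)⟩
  · obtain ⟨Y, hYXr, hcard, hY⟩ := hG.exists_connected_majority hXr_large
    exact ⟨Y, hYXr.trans hXX', hY, by omega,
      inter_nonempty_of_card_lt_card_add_card hYXr hCrX (by omega)⟩

end Robust

section Game

variable {V : Type*} [Fintype V] {k : ℕ}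

open scoped Classical in
noncomputable def freeSet (f : Fin k → Option V) : Finset V :=
  univ.filter fun v => ∀ i, f i ≠ some v

lemma mem_freeSet {f : Fin k → Option V} {v : V} : v ∈ freeSet f ↔ ∀ i, f i ≠ some v := by
  classical
  simp [freeSet]

lemma card_le_card_freeSet_add (f : Fin k → Option V) :
    Fintype.card V ≤ #(freeSet f) + k := by
  classical
  have hocc : (freeSet f)ᶜ.map .some ⊆ univ.image f := by
    intro x hx
    obtain ⟨v, hv, rfl⟩ := mem_map.1 hx
    obtain ⟨i, hi⟩ : ∃ i, f i = some v := by simpa [mem_freeSet] using hv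
    exact mem_image.2 ⟨i, mem_univ i, hi⟩
  calc Fintype.card V = #(freeSet f) + #(freeSet f)ᶜ := (card_add_card_compl _).symm
    _ ≤ #(freeSet f) + k := by
      gcongr
      calc #(freeSet f)ᶜ = #((freeSet f)ᶜ.map .some) := (card_map _).symm
        _ ≤ #(univ.image f) := card_le_card hocc
        _ ≤ k := card_image_le.trans (by simp)

lemma freeSet_update_subset [DecidableEq V] (f : Fin k → Option V) (i : Fin k) (r : V) :
    freeSet (Function.update f i (some r)) ⊆ (freeSet f).erase r ∪ (f i).toFinset := by
  intro v hv
  have hfree := mem_freeSet.1 hv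
  have hvr : v ≠ r := fun h => hfree i (by simp [h])
  by_cases hfi : f i = some v
  · simp [hfi]
  refine mem_union_left _ (mem_erase.2 ⟨hvr, mem_freeSet.2 fun j => ?_⟩)
  rcases eq_or_ne j i with rfl | hj
  · exact hfi
  · simpa [Function.update_of_ne hj] using hfree j

lemma CopMove.erase_freeSet_subset [DecidableEq V] {r : V} {f f' : Fin k → Option V}
    (h : CopMove r f f') : (freeSet f).erase r ⊆ freeSet f' := by
  rcases h with rfl | ⟨i, rfl⟩
  · exact erase_subset _ _
  intro v hv
  obtain ⟨hvr, hv⟩ := mem_erase.1 hv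
  refine mem_freeSet.2 fun j => ?_
  rcases eq_or_ne j i with rfl | hj
  · simpa using Ne.symm hvr
  · simpa [Function.update_of_ne hj] using mem_freeSet.1 hv j

lemma CopMove.card_freeSet_le [DecidableEq V] {r : V} {f f' : Fin k → Option V}
    (h : CopMove r f f') (hr : r ∈ freeSet f) : #(freeSet f') ≤ #(freeSet f) := by
  rcases h with rfl | ⟨i, rfl⟩
  · exact le_rfl
  have hfi : #(f i).toFinset ≤ 1 := by cases f i <;> simp
  calc #(freeSet (Function.update f i (some r)))
      ≤ #((freeSet f).erase r ∪ (f i).toFinset) := card_le_card (freeSet_update_subset f i r)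
    _ ≤ #((freeSet f).erase r) + #(f i).toFinset := card_union_le _ _
    _ ≤ #(freeSet f) := by have := card_erase_add_one hr; omega

lemma IsRobust.majority_not_copsWin {α : ℝ} {G : SimpleGraph V} (hG : IsRobust α G)
    (hfree : ∀ g : Fin k → Option V, (1 - α) * Fintype.card V + 1 ≤ (#(freeSet g) : ℝ))
    {f : Fin k → Option V} {r : V} (hwin : CopsWin G k f r) (hr : r ∈ freeSet f) :
    2 * #(G.componentIn (freeSet f) r) ≤ #(freeSet f) := by
  classical
  induction hwin with
  | step f r f' hmove _ ih =>
    by_contra! hC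
    obtain ⟨w, hrw, hw, hC'⟩ := hG.exists_adj_majority (hfree f) hr hC
      hmove.erase_freeSet_subset (hmove.card_freeSet_le hr)
    exact (ih w hrw (mem_freeSet.1 hw) hw).not_gt hC'

end Game

theorem statement_7_general {V : Type*} [Fintype V] (α : ℝ)
    (G : SimpleGraph V) (hG : IsRobust α G) :
    ∀ k : ℕ, (k : ℤ) ≤ ⌊α * (Fintype.card V : ℝ)⌋ - 2 → ¬ CopsCatch G k := by
  intro k hk hcatch
  have hkα : (k : ℝ) + 2 ≤ α * Fintype.card V := by
    exact_mod_cast Int.le_floor.1 (by omega : (k : ℤ) + 2 ≤ ⌊α * (Fintype.card V : ℝ)⌋)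
  have hfree (g : Fin k → Option V) : (1 - α) * Fintype.card V + 1 ≤ (#(freeSet g) : ℝ) := by
    have : (Fintype.card V : ℝ) ≤ #(freeSet g) + k := by
      exact_mod_cast card_le_card_freeSet_add g
    linarith
  have hstart : freeSet (fun _ : Fin k => (none : Option V)) = univ := by
    ext
    simp [mem_freeSet]
  obtain ⟨Y, -, hYcard, hY⟩ := hG.exists_connected_majority (X := univ) (by
    rw [card_univ]
    linarith [(k.cast_nonneg : (0 : ℝ) ≤ k)])
  obtain ⟨r, hr⟩ := card_pos.1 (by omega : 0 < #Y)
  have hlose := hG.majority_not_copsWin hfree (hcatch r) (by simp [hstart])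
  rw [hstart] at hlose
  have := card_le_card (subset_componentIn (subset_univ Y) hY hr .refl)
  omega

/-- If `0 < α < 1` and `G` is an `α`-robust finite simple graph, then
`⌊α|V|⌋ - 2` cops are not sufficient to catch the robber in the entanglement game on
`G`; that is, any number `k` of cops with `k ≤ ⌊α|V|⌋ - 2` fails to catch the robber. -/
theorem statement_7 {V : Type*} [Fintype V] (α : ℝ) (hα0 : 0 < α) (hα1 : α < 1)
    (G : SimpleGraph V) (hG : IsRobust α G) :
    ∀ k : ℕ, (k : ℤ) ≤ ⌊α * (Fintype.card V : ℝ)⌋ - 2 → ¬ CopsCatch G k :=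
  statement_7_general α G hG
end

section
/- Let G = (V, E) be a finite simple graph on n vertices that does not contain a connected component with more than n/2 vertices. Then there exists a partition V = B₁ ∪ B₂ ∪ B₃ into three pairwise disjoint sets such that (i) |Bᵢ| ≤ n/2 for all i = 1, 2, 3, and (ii) there is no edge of G with one endpoint in Bᵢ and the other in Bⱼ for any 1 ≤ i < j ≤ 3. -/
open scoped Classical

private lemma mem_foldr_union {V : Type*} [DecidableEq V] (L : List (Finset V)) (x : V) :
    x ∈ L.foldr (· ∪ ·) ∅ ↔ ∃ s ∈ L, x ∈ s := by
  induction L with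
  | nil => simp
  | cons a L ih => simp [ih]

private lemma disjoint_foldr_union {V : Type*} [DecidableEq V] (s : Finset V)
    (L : List (Finset V)) (hd : ∀ t ∈ L, Disjoint s t) :
    Disjoint s (L.foldr (· ∪ ·) ∅) := by
  induction L with
  | nil => simp
  | cons a L ih =>
      simp only [List.foldr_cons, Finset.disjoint_union_right]
      exact ⟨hd a (by simp), ih fun t ht => hd t (by simp [ht])⟩

set_option maxHeartbeats 1000000 in
private lemma pack_lemma {V : Type*} [DecidableEq V] (h : ℝ) (h0 : 0 ≤ h) :
    ∀ L : List (Finset V), L.Pairwise Disjoint → (∀ s ∈ L, (s.card : ℝ) ≤ h) →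
    ∃ B1 B2 B3 : Finset V,
      Disjoint B1 B2 ∧ Disjoint B1 B3 ∧ Disjoint B2 B3 ∧
      B1 ∪ B2 ∪ B3 = L.foldr (· ∪ ·) ∅ ∧
      (∀ s ∈ L, s ⊆ B1 ∨ s ⊆ B2 ∨ s ⊆ B3) ∧
      (B1.card : ℝ) ≤ h ∧ (B2.card : ℝ) ≤ h ∧
      (B2 = ∅ → B3 = ∅) ∧ (B2 ≠ ∅ → h < (B1.card : ℝ) + (B2.card : ℝ)) := by
  intro L
  induction L with
  | nil =>
      intro _ _
      exact ⟨∅, ∅, ∅, by simp, by simp, by simp, by simp, by simp, by simpa using h0,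
        by simpa using h0, fun _ => rfl, fun hne => absurd rfl hne⟩
  | cons s L ih =>
      intro hpw hcards
      obtain ⟨hd, hpw'⟩ := List.pairwise_cons.mp hpw
      obtain ⟨B1, B2, B3, d12, d13, d23, hU, hsub, c1, c2, he, hlt⟩ :=
        ih hpw' (fun t ht => hcards t (by simp [ht]))
      have hsF : Disjoint s (L.foldr (· ∪ ·) ∅) := disjoint_foldr_union s L hd
      have hsU : Disjoint s (B1 ∪ B2 ∪ B3) := by rw [hU]; exact hsF
      rw [Finset.disjoint_union_right, Finset.disjoint_union_right] at hsU
      obtain ⟨⟨hs1, hs2⟩, hs3⟩ := hsU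
      have hscard : (s.card : ℝ) ≤ h := hcards s (by simp)
      by_cases hc : (B1.card : ℝ) + s.card ≤ h
      · refine ⟨B1 ∪ s, B2, B3, ?_, ?_, d23, ?_, ?_, ?_, c2, he, ?_⟩
        · exact Finset.disjoint_union_left.mpr ⟨d12, hs2⟩
        · exact Finset.disjoint_union_left.mpr ⟨d13, hs3⟩
        · rw [List.foldr_cons, ← hU]
          ext x
          simp only [Finset.mem_union]
          tauto
        · intro t ht
          rcases List.mem_cons.mp ht with rfl | ht'
          · exact Or.inl Finset.subset_union_right
          · rcases hsub t ht' with h' | h' | h'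
            · exact Or.inl (h'.trans Finset.subset_union_left)
            · exact Or.inr (Or.inl h')
            · exact Or.inr (Or.inr h')
        · have hcu : (B1 ∪ s).card = B1.card + s.card :=
            Finset.card_union_of_disjoint hs1.symm
          rw [hcu]; push_cast; exact hc
        · intro hne
          have h1 := hlt hne
          have h2 : (B1.card : ℝ) ≤ ((B1 ∪ s).card : ℝ) := by
            exact_mod_cast Finset.card_le_card Finset.subset_union_left
          linarith
      · push_neg at hc
        by_cases hB2 : B2 = ∅
        · have hB3 : B3 = ∅ := he hB2
          refine ⟨B1, s, ∅, hs1.symm, Finset.disjoint_empty_right _,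
            Finset.disjoint_empty_right _, ?_, ?_, c1, hscard, ?_, ?_⟩
          · rw [List.foldr_cons, ← hU, hB2, hB3]
            ext x
            simp only [Finset.mem_union, Finset.notMem_empty]
            tauto
          · intro t ht
            rcases List.mem_cons.mp ht with rfl | ht'
            · exact Or.inr (Or.inl subset_rfl)
            · rcases hsub t ht' with h' | h' | h'
              · exact Or.inl h'
              · rw [hB2] at h'
                exact Or.inl ((Finset.subset_empty.mp h') ▸ Finset.empty_subset _)
              · rw [hB3] at h'
                exact Or.inl ((Finset.subset_empty.mp h') ▸ Finset.empty_subset _)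
          · intro _; rfl
          · intro _; exact hc
        · refine ⟨B1, B2, B3 ∪ s, d12, ?_, ?_, ?_, ?_, c1, c2, ?_, fun _ => hlt hB2⟩
          · exact Finset.disjoint_union_right.mpr ⟨d13, hs1.symm⟩
          · exact Finset.disjoint_union_right.mpr ⟨d23, hs2.symm⟩
          · rw [List.foldr_cons, ← hU]
            ext x
            simp only [Finset.mem_union]
            tauto
          · intro t ht
            rcases List.mem_cons.mp ht with rfl | ht'
            · exact Or.inr (Or.inr Finset.subset_union_right)
            · rcases hsub t ht' with h' | h' | h'
              · exact Or.inl h'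
              · exact Or.inr (Or.inl h')
              · exact Or.inr (Or.inr (h'.trans Finset.subset_union_left))
          · intro h'; exact absurd h' hB2

set_option maxHeartbeats 1000000 in
/-- If a finite simple graph `G` on `n` vertices has no connected
component with more than `n/2` vertices (the component of `v` being the set of vertices
reachable from `v`), then the vertex set can be partitioned into three sets `B₁, B₂, B₃`,
each of size at most `n/2`, with no edge of `G` between two different parts. -/
theorem statement_9 {V : Type*} [Fintype V] (G : SimpleGraph V)
    (h : ∀ v : V, ((Finset.univ.filter (fun w => G.Reachable v w)).card : ℝ) ≤
      (Fintype.card V : ℝ) / 2) :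
    ∃ B : Fin 3 → Finset V,
      (∀ v : V, ∃! i : Fin 3, v ∈ B i) ∧
      (∀ i : Fin 3, ((B i).card : ℝ) ≤ (Fintype.card V : ℝ) / 2) ∧
      (∀ i j : Fin 3, i ≠ j → ∀ u ∈ B i, ∀ w ∈ B j, ¬ G.Adj u w) := by
  classical
  set n : ℝ := (Fintype.card V : ℝ) with hn
  have h0 : (0 : ℝ) ≤ n / 2 := by positivity
  set C : V → Finset V := fun v => Finset.univ.filter (fun w => G.Reachable v w) with hC
  have hmemC : ∀ v, v ∈ C v := by
    intro v
    simp only [hC, Finset.mem_filter, Finset.mem_univ, true_and]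
    exact SimpleGraph.Reachable.refl v
  have hCeq : ∀ u v, G.Reachable u v → C u = C v := by
    intro u v huv
    ext w
    simp only [hC, Finset.mem_filter, Finset.mem_univ, true_and]
    exact ⟨fun hw => huv.symm.trans hw, fun hw => huv.trans hw⟩
  set L : List (Finset V) := (Finset.univ.image C).toList with hL
  have hmemL : ∀ v, C v ∈ L := by
    intro v; rw [hL, Finset.mem_toList]; exact Finset.mem_image_of_mem C (Finset.mem_univ v)
  have hLC : ∀ s ∈ L, ∃ v, C v = s := by
    intro s hs
    rw [hL, Finset.mem_toList, Finset.mem_image] at hs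
    obtain ⟨v, _, hv⟩ := hs
    exact ⟨v, hv⟩
  have hpw : L.Pairwise Disjoint := by
    refine List.Nodup.pairwise_of_forall_ne (Finset.nodup_toList _) ?_
    intro a ha b hb hab
    obtain ⟨u, rfl⟩ := hLC a ha
    obtain ⟨v, rfl⟩ := hLC b hb
    rw [Finset.disjoint_left]
    intro x hxa hxb
    simp only [hC, Finset.mem_filter, Finset.mem_univ, true_and] at hxa hxb
    exact hab (hCeq u v (hxa.trans hxb.symm))
  have hcards : ∀ s ∈ L, (s.card : ℝ) ≤ n / 2 := by
    intro s hs
    obtain ⟨v, rfl⟩ := hLC s hs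
    exact h v
  obtain ⟨B1, B2, B3, d12, d13, d23, hU, hsub, c1, c2, he, hlt⟩ :=
    pack_lemma (n / 2) h0 L hpw hcards
  have hUuniv : B1 ∪ B2 ∪ B3 = Finset.univ := by
    rw [hU]
    ext x
    simp only [Finset.mem_univ, iff_true, mem_foldr_union]
    exact ⟨C x, hmemL x, hmemC x⟩
  set B : Fin 3 → Finset V := ![B1, B2, B3] with hB
  have hBmem : ∀ x : V, ∃ i, x ∈ B i := by
    intro x
    have hx : x ∈ B1 ∪ B2 ∪ B3 := hUuniv ▸ Finset.mem_univ x
    simp only [Finset.mem_union] at hx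
    rcases hx with (hx | hx) | hx
    · exact ⟨0, hx⟩
    · exact ⟨1, hx⟩
    · exact ⟨2, hx⟩
  have hBdisj : ∀ i j : Fin 3, i ≠ j → Disjoint (B i) (B j) := by
    intro i j hij
    fin_cases i <;> fin_cases j <;>
      first
        | exact absurd rfl hij
        | exact d12 | exact d13 | exact d23
        | exact d12.symm | exact d13.symm | exact d23.symm
  have hunique : ∀ v : V, ∃! i : Fin 3, v ∈ B i := by
    intro v
    obtain ⟨i, hi⟩ := hBmem v
    refine ⟨i, hi, fun j hj => ?_⟩
    by_contra hne
    exact Finset.disjoint_left.mp (hBdisj j i hne) hj hi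
  refine ⟨B, hunique, ?_, ?_⟩
  · have c3 : (B3.card : ℝ) ≤ n / 2 := by
      by_cases hB2 : B2 = ∅
      · rw [he hB2]; simpa using h0
      · have hd13' : Disjoint (B1 ∪ B2) B3 :=
          Finset.disjoint_union_left.mpr ⟨d13, d23⟩
        have hcardsum : (Fintype.card V : ℕ) = B1.card + B2.card + B3.card := by
          rw [← Finset.card_univ, ← hUuniv, Finset.card_union_of_disjoint hd13',
            Finset.card_union_of_disjoint d12]
        have hlt' := hlt hB2
        have hnsum : n = (B1.card : ℝ) + B2.card + B3.card := by
          rw [hn]; exact_mod_cast hcardsum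
        linarith
    intro i
    fin_cases i
    · exact c1
    · exact c2
    · exact c3
  · intro i j hij u hu w hw hadj
    have hwCu : w ∈ C u := by
      simp only [hC, Finset.mem_filter, Finset.mem_univ, true_and]
      exact hadj.reachable
    have huCu : u ∈ C u := hmemC u
    have hex : ∃ k : Fin 3, C u ⊆ B k := by
      rcases hsub (C u) (hmemL u) with h' | h' | h'
      · exact ⟨0, h'⟩
      · exact ⟨1, h'⟩
      · exact ⟨2, h'⟩
    obtain ⟨k, hk⟩ := hex
    obtain ⟨i', hi', hiu⟩ := hunique u
    obtain ⟨j', hj', hjw⟩ := hunique w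
    have hik : i = k := (hiu i hu).trans (hiu k (hk huCu)).symm
    have hjk : j = k := (hjw j hw).trans (hjw k (hk hwCu)).symm
    exact hij (hik.trans hjk.symm)
end

section
/- Let G be a finite simple graph on m vertices, let 0 < k ≤ m, and suppose G contains no connected component with more than k vertices. Then there exists a partition of the vertex set into two sets S and S̄ such that no edge of G has one endpoint in S and the other in S̄, and |S| ≤ (m + k)/2 and |S̄| ≤ (m + k)/2. -/
open scoped Classical

private lemma closed_reachable {V : Type*} [Fintype V] (G : SimpleGraph V)
    {S : Finset V} (hS : ∀ u ∈ S, ∀ w ∈ Sᶜ, ¬ G.Adj u w) :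
    ∀ {a b : V}, G.Reachable a b → a ∈ S → b ∈ S := by
  intro a b hab ha
  obtain ⟨w⟩ := hab
  induction w with
  | nil => exact ha
  | cons hadj p ih =>
    apply ih
    by_contra hc
    exact hS _ ha _ (Finset.mem_compl.mpr hc) hadj

/-- Let `G` be a finite simple graph on `m` vertices and `0 < k ≤ m`.
If `G` has no connected component with more than `k` vertices (the component of `v`
being the set of vertices reachable from `v`), then the vertex set can be split into
`S` and its complement `S̄` with no edge between them and `|S|, |S̄| ≤ (m + k)/2`. -/
theorem statement_10 {V : Type*} [Fintype V] (G : SimpleGraph V) (k : ℝ)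
    (hk0 : 0 < k) (hkm : k ≤ (Fintype.card V : ℝ))
    (h : ∀ v : V, ((Finset.univ.filter (fun w => G.Reachable v w)).card : ℝ) ≤ k) :
    ∃ S : Finset V,
      (∀ u ∈ S, ∀ w ∈ Sᶜ, ¬ G.Adj u w) ∧
      (S.card : ℝ) ≤ ((Fintype.card V : ℝ) + k) / 2 ∧
      ((Sᶜ : Finset V).card : ℝ) ≤ ((Fintype.card V : ℝ) + k) / 2 := by
  set m : ℝ := (Fintype.card V : ℝ) with hm
  set P : Finset V → Prop := fun S =>
    (∀ u ∈ S, ∀ w ∈ Sᶜ, ¬ G.Adj u w) ∧ (S.card : ℝ) ≤ (m + k) / 2 with hP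
  have hPempty : P ∅ := by
    constructor
    · intro u hu; simp at hu
    · simp; positivity
  have hne : (Finset.univ.filter P).Nonempty :=
    ⟨∅, Finset.mem_filter.mpr ⟨Finset.mem_univ _, hPempty⟩⟩
  obtain ⟨S, hSmem, hSmax⟩ := Finset.exists_max_image _ Finset.card hne
  obtain ⟨-, hSclosed, hScard⟩ := Finset.mem_filter.mp hSmem |>.imp id (fun x => x)
  refine ⟨S, hSclosed, hScard, ?_⟩
  -- need S.card ≥ (m - k)/2
  by_contra hbad
  push_neg at hbad
  have hcompl : ((Sᶜ : Finset V).card : ℝ) = m - S.card := by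
    have hsum : S.card + Sᶜ.card = Fintype.card V := Finset.card_add_card_compl S
    have : (S.card : ℝ) + Sᶜ.card = m := by rw [hm]; exact_mod_cast hsum
    linarith
  have hSsmall : (S.card : ℝ) < (m - k) / 2 := by
    have := hcompl ▸ hbad
    linarith
  -- S ≠ univ
  have hSne : S ≠ Finset.univ := by
    intro heq
    rw [heq] at hSsmall
    simp only [Finset.card_univ] at hSsmall
    have : (Fintype.card V : ℝ) < (m - k) / 2 := hSsmall
    rw [← hm] at this
    linarith
  obtain ⟨v, hv⟩ : ∃ v, v ∉ S := by
    by_contra hc; push_neg at hc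
    exact hSne (Finset.eq_univ_iff_forall.mpr hc)
  set C : Finset V := Finset.univ.filter (fun w => G.Reachable v w) with hC
  have hvC : v ∈ C := Finset.mem_filter.mpr ⟨Finset.mem_univ _, SimpleGraph.Reachable.refl v⟩
  have hdisj : Disjoint S C := by
    rw [Finset.disjoint_left]
    intro u hu huC
    simp only [hC, Finset.mem_filter] at huC
    exact hv (closed_reachable G hSclosed huC.2.symm hu)
  set S' : Finset V := S ∪ C with hS'
  have hS'closed : ∀ u ∈ S', ∀ w ∈ S'ᶜ, ¬ G.Adj u w := by
    intro u hu w hw hadj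
    rw [Finset.mem_compl, hS', Finset.mem_union] at hw
    push_neg at hw
    rcases Finset.mem_union.mp hu with hu | hu
    · exact hSclosed _ hu _ (Finset.mem_compl.mpr hw.1) hadj
    · simp only [hC, Finset.mem_filter] at hu
      exact hw.2 (by simp [hC]; exact hu.2.trans hadj.reachable)
  have hS'card : (S'.card : ℝ) ≤ (m + k) / 2 := by
    have : S'.card = S.card + C.card := by
      rw [hS', Finset.card_union_of_disjoint hdisj]
    rw [this]; push_cast
    have := h v
    rw [← hC] at this
    linarith
  have hS'P : P S' := ⟨hS'closed, hS'card⟩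
  have hle := hSmax S' (Finset.mem_filter.mpr ⟨Finset.mem_univ _, hS'P⟩)
  have hlt : S.card < S'.card := by
    apply Finset.card_lt_card
    constructor
    · exact Finset.subset_union_left
    · intro hsub
      exact hv (hsub (Finset.mem_union_right _ hvC))
  omega
end

section
/- For every even n ≥ 4, if M₁ and M₂ are two independent uniformly chosen random perfect matchings of the complete graph Kₙ, then the probability that the union M₁ ∪ M₂ is a Hamiltonian cycle on the n vertices is at least 2/(n−1). -/
open scoped Classical

/-- `M` is a perfect matching of the complete graph on `V`: every vertex is adjacent in
`M` to exactly one other vertex. -/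
def IsPerfectMatching' {V : Type*} (M : SimpleGraph V) : Prop :=
  ∀ v : V, ∃! w : V, M.Adj v w

/-- The (finite) type of perfect matchings of the complete graph `Kₙ`. -/
abbrev PM (n : ℕ) := {M : SimpleGraph (Fin n) // IsPerfectMatching' M}

/-- The probability of the event `P` under the uniform distribution on the finite type `Ω`. -/
noncomputable def unifProb {Ω : Type*} [Fintype Ω] (P : Ω → Prop) : ℝ :=
  ((Finset.univ.filter P).card : ℝ) / (Fintype.card Ω : ℝ)

/-- `H` is a (Hamiltonian) cycle on all of its `n` vertices: it is connected and every
vertex has exactly two neighbours. -/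
def IsCycleGraph {n : ℕ} (H : SimpleGraph (Fin n)) : Prop :=
  H.Connected ∧ ∀ v : Fin n, (Finset.univ.filter (fun w => H.Adj v w)).card = 2

/-!
A Hamiltonian cycle on an even number `n` of vertices is the union of two perfect matchings, and
relabelling such a pair `(M₁, M₂)` by the permutations fixing the vertex `0` is injective: a common
automorphism of `M₁` and `M₂` fixing a vertex fixes its partners in both matchings, hence, by
connectedness, every vertex. So at least `(n - 1)!` ordered pairs of perfect matchings form a
Hamiltonian cycle. On the other hand, choosing the partner of one vertex and recursing shows that
there are at most `(n - 1)‼` perfect matchings. The probability is thus at least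
`(n - 1)! / ((n - 1)‼)² = (n - 2)‼ / (n - 1)‼ ≥ 2 / (n - 1)`.
-/

open SimpleGraph Equiv Finset
open scoped Nat

namespace IsPerfectMatching'

variable {V W : Type*} {M M' : SimpleGraph V} {a b : V}

lemma adj_iff_eq (hM : IsPerfectMatching' M) (hab : M.Adj a b) {c : V} :
    M.Adj a c ↔ c = b :=
  ⟨fun hac => (hM a).unique hac hab, fun h => h ▸ hab⟩

lemma comap {M : SimpleGraph W} (hM : IsPerfectMatching' M) (e : V ≃ W) :
    IsPerfectMatching' (M.comap e) := fun v => by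
  obtain ⟨w, hw, -⟩ := hM (e v)
  refine ⟨e.symm w, by simpa using hw, fun u hu => ?_⟩
  rw [eq_symm_apply, ← hM.adj_iff_eq hw]
  exact hu

lemma apply_eq_of_adj (hM : IsPerfectMatching' M) {τ : Perm V} (hτ : M.comap τ = M) {v w : V}
    (hv : τ v = v) (hvw : M.Adj v w) : τ w = w := by
  have : M.Adj (τ v) (τ w) := by rw [← comap_adj, hτ]; exact hvw
  rw [hv] at this
  exact (hM.adj_iff_eq hvw).1 this

lemma comap_compl_edge (hM : IsPerfectMatching' M) (hab : M.Adj a b) :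
    IsPerfectMatching' (M.comap (Subtype.val : {x // x ≠ a ∧ x ≠ b} → V)) := by
  rintro ⟨x, hxa, hxb⟩
  obtain ⟨y, hxy, -⟩ := hM x
  have hya : y ≠ a := by rintro rfl; exact hxb ((hM.adj_iff_eq hab).1 hxy.symm)
  have hyb : y ≠ b := by rintro rfl; exact hxa ((hM.adj_iff_eq hab.symm).1 hxy.symm)
  exact ⟨⟨y, hya, hyb⟩, hxy, fun z hz => Subtype.ext ((hM x).unique hz hxy)⟩

lemma eq_of_comap_compl_edge_eq (hM : IsPerfectMatching' M) (hM' : IsPerfectMatching' M')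
    (hab : M.Adj a b) (hab' : M'.Adj a b)
    (h : M.comap (Subtype.val : {x // x ≠ a ∧ x ≠ b} → V) = M'.comap Subtype.val) : M = M' := by
  have hend : ∀ x y, x = a ∨ x = b → (M.Adj x y ↔ M'.Adj x y) := by
    rintro x y (rfl | rfl)
    · rw [hM.adj_iff_eq hab, hM'.adj_iff_eq hab']
    · rw [hM.adj_iff_eq hab.symm, hM'.adj_iff_eq hab'.symm]
  ext x y
  by_cases hx : x = a ∨ x = b
  · exact hend x y hx
  by_cases hy : y = a ∨ y = b
  · rw [M.adj_comm, M'.adj_comm]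
    exact hend y x hy
  rw [not_or] at hx hy
  exact Iff.of_eq (congrArg (fun G => G.Adj ⟨x, hx⟩ ⟨y, hy⟩) h)

end IsPerfectMatching'

section Count

variable {α : Type*} [Finite α]

lemma card_subtype_ne_and_ne {a b : α} (h : b ≠ a) :
    Nat.card {x // x ≠ a ∧ x ≠ b} = Nat.card α - 2 := by
  have := Fintype.ofFinite α
  rw [Nat.card_eq_fintype_card, Nat.card_eq_fintype_card, Fintype.card_subtype,
    show ({x | x ≠ a ∧ x ≠ b} : Finset α) = (univ.erase a).erase b by ext; simp [and_comm],
    card_erase_of_mem (by simpa using h), card_erase_of_mem (mem_univ a), card_univ]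
  omega

/-- Classify the perfect matchings by the partner `b` of `a`; removing the edge `ab` is injective
on each class. -/
lemma card_perfectMatching_le_mul (a : α) {C : ℕ}
    (hC : ∀ b ≠ a, Nat.card {M : SimpleGraph {x // x ≠ a ∧ x ≠ b} // IsPerfectMatching' M} ≤ C) :
    Nat.card {M : SimpleGraph α // IsPerfectMatching' M} ≤ (Nat.card α - 1) * C := by
  have := Fintype.ofFinite α
  let partner (M : {M : SimpleGraph α // IsPerfectMatching' M}) : {b // b ≠ a} :=
    ⟨(M.2 a).exists.choose, (M.1.ne_of_adj (M.2 a).exists.choose_spec).symm⟩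
  have hadj (b : {b // b ≠ a}) (M : {M // partner M = b}) : M.1.1.Adj a b := by
    obtain ⟨M, rfl⟩ := M
    exact (M.2 a).exists.choose_spec
  let removeEdge (b : {b // b ≠ a}) (M : {M // partner M = b}) :
      {M : SimpleGraph {x // x ≠ a ∧ x ≠ b.1} // IsPerfectMatching' M} :=
    ⟨_, M.1.2.comap_compl_edge (hadj b M)⟩
  have hremoveEdge (b) : Function.Injective (removeEdge b) := fun M M' h =>
    Subtype.ext <| Subtype.ext <| M.1.2.eq_of_comap_compl_edge_eq M'.1.2 (hadj b M) (hadj b M')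
      (congrArg Subtype.val h)
  rw [← Nat.card_congr (Equiv.sigmaFiberEquiv partner), Nat.card_sigma]
  calc ∑ b, Nat.card {M // partner M = b}
      ≤ ∑ b : {b // b ≠ a}, C := sum_le_sum fun b _ =>
        (Nat.card_le_card_of_injective _ (hremoveEdge b)).trans (hC b b.2)
    _ = (Nat.card α - 1) * C := by simp [Nat.card_eq_fintype_card]

theorem card_perfectMatching_le_doubleFactorial :
    Nat.card {M : SimpleGraph α // IsPerfectMatching' M} ≤ (Nat.card α - 1)‼ := by
  induction h : Nat.card α using Nat.strong_induction_on generalizing α with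
  | _ n ih =>
  match n, ih with
  | 0, _ | 1, _ =>
    have : Subsingleton α := Finite.card_le_one_iff_subsingleton.1 (by omega)
    have : Subsingleton (SimpleGraph α) :=
      ⟨fun G H => by ext x y; simp [Subsingleton.elim x y]⟩
    exact (Finite.card_le_one_iff_subsingleton.2 inferInstance).trans (by simp)
  | m + 2, ih =>
    obtain ⟨a⟩ : Nonempty α := (Nat.card_pos_iff.1 (by omega)).1
    calc Nat.card {M : SimpleGraph α // IsPerfectMatching' M}
        ≤ (Nat.card α - 1) * (m - 1)‼ := card_perfectMatching_le_mul a fun b hb =>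
          ih m (by omega) (card_subtype_ne_and_ne hb |>.trans (by omega))
      _ = (m + 2 - 1)‼ := by rw [h, show m + 2 - 1 = m + 1 from rfl, Nat.doubleFactorial_add_one]

end Count

section Automorphism

variable {V : Type*} {M₁ M₂ : SimpleGraph V}

lemma apply_eq_of_reachable_sup (h₁ : IsPerfectMatching' M₁) (h₂ : IsPerfectMatching' M₂)
    {τ : Perm V} (hτ₁ : M₁.comap τ = M₁) (hτ₂ : M₂.comap τ = M₂) {v w : V} (hv : τ v = v)
    (hvw : (M₁ ⊔ M₂).Reachable v w) : τ w = w := by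
  rw [reachable_iff_reflTransGen] at hvw
  induction hvw with
  | refl => exact hv
  | tail _ hadj ih =>
    rcases hadj with hadj | hadj
    exacts [h₁.apply_eq_of_adj hτ₁ ih hadj, h₂.apply_eq_of_adj hτ₂ ih hadj]

lemma injOn_comap_prod_of_connected (h₁ : IsPerfectMatching' M₁) (h₂ : IsPerfectMatching' M₂)
    (hconn : (M₁ ⊔ M₂).Connected) (v₀ : V) :
    Set.InjOn (fun π : Perm V => (M₁.comap π, M₂.comap π)) {π | π v₀ = v₀} := by
  intro π (hπ : π v₀ = v₀) ρ (hρ : ρ v₀ = v₀) hπρ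
  simp only [Prod.mk.injEq] at hπρ
  have hcomap : ∀ M : SimpleGraph V, M.comap π = M.comap ρ → M.comap ⇑(π * ρ⁻¹) = M := by
    intro M hM
    rw [Perm.coe_mul, ← comap_comap, hM, comap_comap, ← Perm.coe_mul, mul_inv_cancel,
      Perm.coe_one, comap_id]
  have hfix : ∀ w, (π * ρ⁻¹) w = w := fun w =>
    apply_eq_of_reachable_sup h₁ h₂ (hcomap M₁ hπρ.1) (hcomap M₂ hπρ.2)
      (by rw [Perm.mul_apply, Perm.inv_eq_iff_eq.2 hρ.symm, hπ])
      (hconn.preconnected v₀ w)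
  exact mul_inv_eq_one.1 (Equiv.ext hfix)

end Automorphism

lemma IsCycleGraph.comap {n : ℕ} {H : SimpleGraph (Fin n)} (hH : IsCycleGraph H)
    (π : Perm (Fin n)) : IsCycleGraph (H.comap π) :=
  ⟨(Iso.comap π H).connected_iff.2 hH.1, fun v => by
    rw [← hH.2 (π v)]
    exact card_equiv π (by simp)⟩

lemma factorial_le_card_isCycleGraph {n : ℕ} {M₁ M₂ : SimpleGraph (Fin (n + 1))}
    (h₁ : IsPerfectMatching' M₁) (h₂ : IsPerfectMatching' M₂) (hcyc : IsCycleGraph (M₁ ⊔ M₂)) :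
    n ! ≤ #{q : PM (n + 1) × PM (n + 1) | IsCycleGraph (q.1.val ⊔ q.2.val)} := by
  let fixZero (σ : Perm (Fin n)) : Perm (Fin (n + 1)) := Perm.decomposeFin.symm (0, σ)
  let transport (σ : Perm (Fin n)) :
      {q : PM (n + 1) × PM (n + 1) // IsCycleGraph (q.1.val ⊔ q.2.val)} :=
    ⟨(⟨M₁.comap (fixZero σ), h₁.comap _⟩, ⟨M₂.comap (fixZero σ), h₂.comap _⟩), hcyc.comap _⟩
  have hinj : Function.Injective transport := fun σ ρ h => by
    have hfix : fixZero σ = fixZero ρ :=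
      injOn_comap_prod_of_connected h₁ h₂ hcyc.1 0 (Perm.decomposeFin_symm_apply_zero 0 σ)
        (Perm.decomposeFin_symm_apply_zero 0 ρ)
        (Prod.ext (congrArg (·.1.1.1) h) (congrArg (·.1.2.1) h))
    exact congrArg Prod.snd (Perm.decomposeFin.symm.injective hfix)
  calc n ! = Fintype.card (Perm (Fin n)) := by rw [Fintype.card_perm, Fintype.card_fin]
    _ ≤ _ := Fintype.card_le_of_injective transport hinj
    _ = _ := Fintype.card_subtype _

def consecutivePairs (n : ℕ) : SimpleGraph (Fin n) :=
  SimpleGraph.fromRel fun i j => i.val / 2 = j.val / 2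

lemma isPerfectMatching'_consecutivePairs {n : ℕ} (hn : Even n) :
    IsPerfectMatching' (consecutivePairs n) := fun i => by
  obtain ⟨m, rfl⟩ := hn
  have hi := i.isLt
  refine ⟨⟨if i.val % 2 = 0 then i.val + 1 else i.val - 1, by split <;> omega⟩, ?_, ?_⟩
  · simp only [consecutivePairs, fromRel_adj, ne_eq, Fin.ext_iff]
    split <;> omega
  · intro j hj
    simp only [consecutivePairs, fromRel_adj, ne_eq, Fin.ext_iff] at hj ⊢
    split <;> omega

lemma consecutivePairs_sup_comap_finRotate {n : ℕ} (hn : Even n) :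
    consecutivePairs n ⊔ (consecutivePairs n).comap (finRotate n) = cycleGraph n := by
  obtain ⟨r, hr⟩ := hn
  match n, hr with
  | 0, _ => ext i; exact i.elim0
  | 1, hr => omega
  | l + 2, hr =>
    ext i j
    rw [sup_adj, comap_adj, cycleGraph_adj, sub_eq_iff_eq_add', sub_eq_iff_eq_add',
      finRotate_apply, finRotate_apply]
    simp only [consecutivePairs, fromRel_adj, ne_eq, Fin.ext_iff, Fin.val_add_one, Fin.val_last]
    have hi := i.isLt
    have hj := j.isLt
    split <;> split <;> omega

lemma isCycleGraph_cycleGraph {n : ℕ} (hn : 3 ≤ n) : IsCycleGraph (cycleGraph n) := by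
  obtain ⟨k, rfl⟩ : ∃ k, n = k + 3 := ⟨n - 3, by omega⟩
  refine ⟨cycleGraph_connected, fun v => ?_⟩
  rw [← cycleGraph_degree_three_le (v := v), ← card_neighborFinset_eq_degree,
    neighborFinset_eq_filter]
  convert rfl

lemma two_mul_doubleFactorial_odd_le (k : ℕ) : 2 * (2 * k + 1)‼ ≤ (2 * k + 2)‼ := by
  induction k with
  | zero => rfl
  | succ k ih =>
    rw [show 2 * (k + 1) + 1 = 2 * k + 1 + 2 by ring, show 2 * (k + 1) + 2 = 2 * k + 2 + 2 by ring,
      Nat.doubleFactorial_add_two, Nat.doubleFactorial_add_two, mul_left_comm]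
    exact Nat.mul_le_mul (by omega) ih

lemma two_mul_doubleFactorial_sq_le (k : ℕ) :
    2 * ((2 * k + 3)‼ * (2 * k + 3)‼) ≤ (2 * k + 3) * (2 * k + 3)! := by
  have hodd : (2 * k + 3)‼ = (2 * k + 3) * (2 * k + 1)‼ := Nat.doubleFactorial_add_two _
  have hfac : (2 * k + 3)! = (2 * k + 3)‼ * (2 * k + 2)‼ := Nat.factorial_eq_mul_doubleFactorial _
  calc 2 * ((2 * k + 3)‼ * (2 * k + 3)‼) = (2 * k + 3)‼ * ((2 * k + 3) * (2 * (2 * k + 1)‼)) := by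
        rw [hodd]; ring
    _ ≤ (2 * k + 3)‼ * ((2 * k + 3) * (2 * k + 2)‼) := by
        gcongr; exact two_mul_doubleFactorial_odd_le k
    _ = (2 * k + 3) * (2 * k + 3)! := by rw [hfac]; ring

/-- For every even `n ≥ 4`, two independent uniformly chosen random
perfect matchings `M₁, M₂` of `Kₙ` form a Hamiltonian cycle `M₁ ∪ M₂` on the `n`
vertices with probability at least `2/(n-1)`. -/
theorem statement_15 : ∀ n : ℕ, 4 ≤ n → Even n →
    unifProb (fun q : PM n × PM n => IsCycleGraph (q.1.val ⊔ q.2.val))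
      ≥ 2 / ((n : ℝ) - 1) := by
  intro n hn heven
  obtain ⟨k, rfl⟩ : ∃ k, n = 2 * k + 4 := ⟨n / 2 - 2, by obtain ⟨r, hr⟩ := heven; omega⟩
  have hM := isPerfectMatching'_consecutivePairs heven
  have hcycle := consecutivePairs_sup_comap_finRotate heven ▸ isCycleGraph_cycleGraph (by omega)
  have hgood := factorial_le_card_isCycleGraph hM (hM.comap (finRotate _)) hcycle
  have hpm : Nat.card (PM (2 * k + 4)) ≤ (2 * k + 3)‼ := by
    simpa using card_perfectMatching_le_doubleFactorial (α := Fin (2 * k + 4))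
  have : Nonempty (PM (2 * k + 4)) := ⟨⟨_, hM⟩⟩
  have hpm_pos : 0 < Nat.card (PM (2 * k + 4)) := Nat.card_pos
  have key : 2 * (Nat.card (PM (2 * k + 4)) * Nat.card (PM (2 * k + 4))) ≤
      #{q : PM (2 * k + 4) × PM (2 * k + 4) | IsCycleGraph (q.1.val ⊔ q.2.val)} * (2 * k + 3) :=
    calc _ ≤ 2 * ((2 * k + 3)‼ * (2 * k + 3)‼) := by gcongr
      _ ≤ (2 * k + 3) * (2 * k + 3)! := two_mul_doubleFactorial_sq_le k
      _ ≤ _ := by rw [mul_comm]; gcongr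
  have hn1 : ((2 * k + 4 : ℕ) : ℝ) - 1 = ((2 * k + 3 : ℕ) : ℝ) := by push_cast; ring
  rw [unifProb, Fintype.card_prod, ← Nat.card_eq_fintype_card, ge_iff_le, hn1,
    div_le_div_iff₀ (by positivity) (by positivity)]
  exact_mod_cast key
end
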